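/- arXiv:2409.04786 — 11 statements merged into one kernel-verified Lean document; each statement's English description precedes it below -/
import Mathlib

section
/- Let η, μ ≥ 0 and 0 < ρ < 1. If a graph G on n vertices admits balanced (η,μ,ρ)-separators, then the treewidth of G satisfies tw(G) ≤ (2^ρ · η · ω(G)^μ)/(2^ρ − 1) · n^ρ, where ω(G) is the maximum number of vertices of a clique in G. -/
/-- An `F`-copy in `G`, encoded by the injective map sending the vertices of the
pattern graph `F` into `G` (the inverse of the isomorphism `π`). -/
def IsCopy {W V : Type} (F : SimpleGraph W) (G : SimpleGraph V) (φ : W → V) : Prop :=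
  Function.Injective φ ∧ ∀ a b : W, F.Adj a b → G.Adj (φ a) (φ b)

/-- `S` is an `𝓕`-hitting set of `G`: every copy in `G` of a member of the family meets `S`
(equivalently, `G - S` contains no subgraph isomorphic to a member of the family). -/
def IsHittingSet {V ι : Type} {W : ι → Type} (G : SimpleGraph V)
    (F : ∀ i, SimpleGraph (W i)) (S : Set V) : Prop :=
  ∀ (i : ι) (φ : W i → V), IsCopy (F i) G φ → ∃ a, φ a ∈ S

/-- An indexed family of sets forms a sunflower with core `X`. -/
def IsSunflower {V ι : Type} (s : ι → Set V) (X : Set V) : Prop :=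
  (∀ i, X ⊆ s i) ∧ Pairwise fun i j => Disjoint (s i \ X) (s j \ X)

/-- `(X, F, f)` is an `(𝓕,δ)`-heavy core in `G`, where `γ = max_{F ∈ 𝓕} |V(F)|`. -/
def IsHeavyCore {V W : Type} (γ δ : ℕ) (G : SimpleGraph V) (F : SimpleGraph W)
    (X : Set V) (f : ↥X → W) : Prop :=
  Function.Injective f ∧
  ∃ φ : Fin (γ ^ X.ncard * δ) → W → V,
    (∀ j, IsCopy F G (φ j)) ∧
    (∀ j (x : ↥X), φ j (f x) = (x : V)) ∧
    IsSunflower (fun j => Set.range (φ j)) X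

/-- `(X, F, f) ≺ (Y, F, g)` : `X ⊊ Y` and `f = g|_X`. -/
def HCPrec {V W : Type} (X : Set V) (f : ↥X → W) (Y : Set V) (g : ↥Y → W) : Prop :=
  ∃ h : X ⊆ Y, X ≠ Y ∧ ∀ (x : V) (hx : x ∈ X), f ⟨x, hx⟩ = g ⟨x, h hx⟩

/-- The heavy core `(X, F, f)` is `U`-minimal. -/
def UMinimalHC {V W : Type} (γ δ : ℕ) (G : SimpleGraph V) (F : SimpleGraph W)
    (U X : Set V) (f : ↥X → W) : Prop :=
  ¬ X ⊆ U ∧ ∀ (Y : Set V) (g : ↥Y → W),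
    IsHeavyCore γ δ G F Y g → HCPrec Y g X f → Y ⊆ U

/-- The `F`-copy `φ` is `U`-redundant. -/
def CopyURedundant {V W : Type} (G : SimpleGraph V) (F : SimpleGraph W)
    (U : Set V) (φ : W → V) : Prop :=
  ∃ ψ : W → V, IsCopy F G ψ ∧ ¬ Set.range ψ ⊆ U ∧ Set.range ψ \ U ⊂ Set.range φ \ U

/-- The heavy core `(X, F, f)` is `U`-redundant: every `F`-copy `(H, π)` in `G` with
`(X,F,f) ⪯ (V(H),F,π)` is `U`-redundant. -/
def HCURedundant {V W : Type} (G : SimpleGraph V) (F : SimpleGraph W)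
    (U X : Set V) (f : ↥X → W) : Prop :=
  ∀ φ : W → V, IsCopy F G φ → (∀ x : ↥X, φ (f x) = (x : V)) → CopyURedundant G F U φ

/-- The set of vertices weakly `r`-reachable from `v` under the ordering `σ`. -/
def WR {V : Type} (G : SimpleGraph V) (σ : V ↪ ℕ) (r : ℕ) (v : V) : Set V :=
  {u | ∃ p : G.Walk v u, p.IsPath ∧ p.length ≤ r ∧ ∀ w ∈ p.support, σ w ≤ σ u}

/-- The weak `r`-coloring number of `G` under the ordering `σ`. -/
noncomputable def wcolOn {V : Type} [Fintype V] (G : SimpleGraph V) (σ : V ↪ ℕ) (r : ℕ) : ℕ :=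
  Finset.univ.sup fun v => (WR G σ r v).ncard

/-- The weak `r`-coloring number of `G`. -/
noncomputable def wcol {V : Type} [Fintype V] (G : SimpleGraph V) (r : ℕ) : ℕ :=
  sInf (Set.range fun σ : V ↪ ℕ => wcolOn G σ r)

/-- The clique number `ω(G)`. -/
noncomputable def omegaClique {V : Type} (G : SimpleGraph V) : ℕ :=
  sSup {n | ∃ s : Finset V, G.IsNClique n s}

/-- `G` admits balanced `(η, μ, ρ)`-separators. -/
def HasBalancedSeparators {V : Type} [Fintype V] (G : SimpleGraph V) (η μ ρ : ℝ) : Prop :=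
  ∀ A : Set V, ∃ S : Set V, S ⊆ A ∧
    (S.ncard : ℝ) ≤ η * (omegaClique (G.induce A) : ℝ) ^ μ * (A.ncard : ℝ) ^ ρ ∧
    ∀ C : (G.induce (A \ S)).ConnectedComponent, (C.supp.ncard : ℝ) ≤ (A.ncard : ℝ) / 2

/-- `(T, β)` is a tree decomposition of `G`. -/
def IsTreeDecomp {V : Type} {n : ℕ} (G : SimpleGraph V) (T : SimpleGraph (Fin n))
    (β : Fin n → Set V) : Prop :=
  T.IsTree ∧ (∀ v : V, ∃ t, v ∈ β t) ∧
  (∀ u v : V, G.Adj u v → ∃ t, u ∈ β t ∧ v ∈ β t) ∧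
  (∀ v : V, (T.induce {t | v ∈ β t}).Connected)

/-- The treewidth of `G`. -/
noncomputable def treewidth {V : Type} (G : SimpleGraph V) : ℕ :=
  sInf {w | ∃ (n : ℕ) (T : SimpleGraph (Fin n)) (β : Fin n → Set V),
    IsTreeDecomp G T β ∧ ∀ t, (β t).ncard ≤ w + 1}

/-- The Gaifman graph of a collection of sets. -/
def gaifman {V : Type} (𝓧 : Set (Set V)) : SimpleGraph ↥(⋃₀ 𝓧) :=
  SimpleGraph.fromRel fun u v => ∃ X ∈ 𝓧, (u : V) ∈ X ∧ (v : V) ∈ X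

/-- Equality of standard triples `(X, F_i, f)` and `(X', F_{i'}, f')`. -/
def TripleEq {V ι : Type} {W : ι → Type}
    (i : ι) (X : Set V) (f : ↥X → W i) (i' : ι) (X' : Set V) (f' : ↥X' → W i') : Prop :=
  ∃ hi : i = i', X = X' ∧ ∀ (x : V) (hx : x ∈ X) (hx' : x ∈ X'),
    cast (congrArg W hi) (f ⟨x, hx⟩) = f' ⟨x, hx'⟩

/-- `G⁺` : add one new vertex adjacent to all vertices of `G`. -/
def addUniversal {V : Type} (G : SimpleGraph V) : SimpleGraph (Option V) :=
  SimpleGraph.fromRel fun u v =>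
    (∃ a b, u = some a ∧ v = some b ∧ G.Adj a b) ∨ u = none

/-- `𝓥_𝓕(G)` : the vertex sets of subgraphs of `G` isomorphic to a member of the family. -/
def VF {V ι : Type} {W : ι → Type} (G : SimpleGraph V) (F : ∀ i, SimpleGraph (W i)) :
    Set (Set V) :=
  {A | ∃ (i : ι) (φ : W i → V), IsCopy (F i) G φ ∧ A = Set.range φ}

open SimpleGraph

section Helpers

lemma tw_connected_of_iso {α β : Type} {G : SimpleGraph α} {H : SimpleGraph β}
    (φ : G ≃g H) (h : G.Connected) : H.Connected :=
  h.map φ.toHom φ.toEquiv.surjective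

lemma tw_isTree_of_iso {α β : Type} {G : SimpleGraph α} {H : SimpleGraph β}
    (φ : G ≃g H) (h : G.IsTree) : H.IsTree := by
  refine ⟨tw_connected_of_iso φ h.1, ?_⟩
  intro v c hc
  exact h.2 _ (hc.map (f := φ.symm.toHom) φ.symm.toEquiv.injective)

lemma tw_connected_induce_of_maps {α β : Type} {G : SimpleGraph α} {H : SimpleGraph β}
    (f : α → β) (hinj : Function.Injective f)
    (hadj : ∀ a b, G.Adj a b ↔ H.Adj (f a) (f b))
    (s : Set β) (hs : s ⊆ Set.range f)
    (h : (G.induce (f ⁻¹' s)).Connected) : (H.induce s).Connected := by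
  have hsurj : Function.Surjective (fun (a : ↥(f ⁻¹' s)) => (⟨f a.1, a.2⟩ : ↥s)) := by
    rintro ⟨y, hy⟩
    obtain ⟨x, rfl⟩ := hs hy
    exact ⟨⟨x, hy⟩, rfl⟩
  refine h.map ⟨fun a => ⟨f a.1, a.2⟩, ?_⟩ hsurj
  intro a b hab
  exact (hadj a.1 b.1).1 hab

end Helpers

section Glue

variable {Comp : Type} {ι : Comp → Type} (T : ∀ c, SimpleGraph (ι c)) (r : ∀ c, ι c)

def glueT : SimpleGraph (Option (Σ c, ι c)) where
  Adj x y := (∃ c, x = none ∧ y = some ⟨c, r c⟩) ∨ (∃ c, x = some ⟨c, r c⟩ ∧ y = none) ∨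
    (∃ (c : Comp) (a b : ι c), (T c).Adj a b ∧ x = some ⟨c, a⟩ ∧ y = some ⟨c, b⟩)
  symm := by
    constructor
    rintro x y (⟨c, rfl, rfl⟩ | ⟨c, rfl, rfl⟩ | ⟨c, a, b, hab, rfl, rfl⟩)
    · exact Or.inr (Or.inl ⟨c, rfl, rfl⟩)
    · exact Or.inl ⟨c, rfl, rfl⟩
    · exact Or.inr (Or.inr ⟨c, b, a, hab.symm, rfl, rfl⟩)
  loopless := by
    constructor
    rintro x (⟨c, rfl, h⟩ | ⟨c, h, rfl⟩ | ⟨c, a, b, hab, rfl, h⟩)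
    · cases h
    · cases h
    · obtain ⟨rfl⟩ := Sigma.mk.inj_iff.mp (Option.some.inj h.symm) |>.2
      exact hab.ne rfl

lemma glueT_adj_some_some {c : Comp} {a b : ι c} :
    (glueT T r).Adj (some ⟨c, a⟩) (some ⟨c, b⟩) ↔ (T c).Adj a b := by
  constructor
  · rintro (⟨c', h, _⟩ | ⟨c', _, h⟩ | ⟨c', a', b', hab, h1, h2⟩)
    · cases h
    · cases h
    · obtain ⟨rfl, ha⟩ := Sigma.mk.inj_iff.mp (Option.some.inj h1)
      obtain ⟨-, hb⟩ := Sigma.mk.inj_iff.mp (Option.some.inj h2)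
      rw [eq_of_heq ha, eq_of_heq hb]
      exact hab
  · intro h
    exact Or.inr (Or.inr ⟨c, a, b, h, rfl, rfl⟩)

lemma glueT_adj_none {x : Option (Σ c, ι c)} :
    (glueT T r).Adj none x ↔ ∃ c, x = some ⟨c, r c⟩ := by
  constructor
  · rintro (⟨c, -, rfl⟩ | ⟨c, h, -⟩ | ⟨c, a, b, -, h, -⟩)
    · exact ⟨c, rfl⟩
    · cases h
    · cases h
  · rintro ⟨c, rfl⟩
    exact Or.inl ⟨c, rfl, rfl⟩

def fiberHom (c : Comp) : T c →g glueT T r where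
  toFun a := some ⟨c, a⟩
  map_rel' := fun h => Or.inr (Or.inr ⟨c, _, _, h, rfl, rfl⟩)

lemma fiberHom_injective (c : Comp) : Function.Injective (fiberHom T r c) := by
  intro a b h
  exact eq_of_heq (Sigma.mk.inj_iff.mp (Option.some.inj h)).2

lemma glueT_fiber_of_walk {x y : Option (Σ c, ι c)} (w : (glueT T r).Walk x y)
    (hnone : none ∉ w.support) : ∀ {c a}, x = some ⟨c, a⟩ → ∃ b, y = some ⟨c, b⟩ := by
  induction w with
  | nil => exact fun h => ⟨_, h⟩
  | @cons x z y h p ih =>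
    intro c a hx
    subst hx
    rw [SimpleGraph.Walk.support_cons] at hnone
    have hz : z ≠ none := by
      intro hz; subst hz
      exact hnone (List.mem_cons_of_mem _ p.start_mem_support)
    obtain (⟨c', h1, -⟩ | ⟨c', -, h2⟩ | ⟨c', a', b', hab, h1, h2⟩) := h
    · cases h1
    · exact (hz h2).elim
    · obtain ⟨rfl, -⟩ := Sigma.mk.inj_iff.mp (Option.some.inj h1)
      exact ih (fun hm => hnone (List.mem_cons_of_mem _ hm)) h2

lemma glueT_walk_proj {c : Comp} :
    ∀ {x y : Option (Σ c, ι c)} (w : (glueT T r).Walk x y), none ∉ w.support →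
      ∀ (a b : ι c) (hx : x = some ⟨c, a⟩) (hy : y = some ⟨c, b⟩),
      ∃ q : (T c).Walk a b, q.map (fiberHom T r c) = w.copy hx hy := by
  intro x y w
  induction w with
  | nil =>
    intro _ a b hx hy
    subst hx
    obtain ⟨-, hab⟩ := Sigma.mk.inj_iff.mp (Option.some.inj hy.symm)
    obtain rfl := eq_of_heq hab
    exact ⟨SimpleGraph.Walk.nil, by simp [SimpleGraph.Walk.copy_nil]; rfl⟩
  | @cons x z y h p ih =>
    intro hnone a b hx hy
    subst hx
    rw [SimpleGraph.Walk.support_cons] at hnone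
    have hz : z ≠ none := by
      intro hzz; subst hzz
      exact hnone (List.mem_cons_of_mem _ p.start_mem_support)
    obtain (⟨c', h1, -⟩ | ⟨c', -, h2⟩ | ⟨c', a', b', hab, h1, h2⟩) := h
    · cases h1
    · exact (hz h2).elim
    · obtain ⟨rfl, ha⟩ := Sigma.mk.inj_iff.mp (Option.some.inj h1)
      obtain rfl := eq_of_heq ha
      subst h2
      obtain ⟨q, hq⟩ := ih (fun hm => hnone (List.mem_cons_of_mem _ hm)) b' b rfl hy
      refine ⟨SimpleGraph.Walk.cons hab q, ?_⟩
      subst hy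
      rw [SimpleGraph.Walk.copy_rfl_rfl] at hq
      rw [SimpleGraph.Walk.map_cons, SimpleGraph.Walk.copy_rfl_rfl, hq]
      rfl

lemma tw_walk_loop_nil {α : Type} {G : SimpleGraph α} {u : α} (w : G.Walk u u)
    (h : w.support.Nodup) : w = SimpleGraph.Walk.nil := by
  cases w with
  | nil => rfl
  | cons h' p =>
    rw [SimpleGraph.Walk.support_cons, List.nodup_cons] at h
    exact absurd p.end_mem_support h.1

lemma glueT_connected (hT : ∀ c, (T c).Connected) : (glueT T r).Connected := by
  rw [SimpleGraph.connected_iff_exists_forall_reachable]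
  refine ⟨none, ?_⟩
  rintro (_ | ⟨c, a⟩)
  · exact SimpleGraph.Reachable.refl _
  · have h1 : (glueT T r).Reachable (some ⟨c, r c⟩) (some ⟨c, a⟩) :=
      ((hT c).preconnected (r c) a).map (fiberHom T r c)
    exact (SimpleGraph.Adj.reachable (Or.inl ⟨c, rfl, rfl⟩)).trans h1

lemma glueT_isTree (hT : ∀ c, (T c).IsTree) : (glueT T r).IsTree := by
  classical
  refine ⟨glueT_connected T r (fun c => (hT c).1), ?_⟩
  intro v w hw
  by_cases hn : (none : Option (Σ c, ι c)) ∈ w.support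
  · -- rotate so the cycle starts at `none`
    have hW : ((w.rotate _ hn)).IsCycle := hw.rotate hn
    set W := w.rotate _ hn with hWdef
    clear_value W
    clear hWdef hw hn w
    cases W with
    | nil => exact SimpleGraph.Walk.IsCycle.not_of_nil hW
    | cons h p =>
      obtain ⟨c1, rfl⟩ := (glueT_adj_none T r).mp h
      -- decompose as q.concat h'
      obtain ⟨x, q, h', hWeq⟩ := SimpleGraph.Walk.exists_cons_eq_concat h p
      have hsupp : (SimpleGraph.Walk.cons h p).support.tail.Nodup := hW.2
      rw [SimpleGraph.Walk.support_cons] at hsupp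
      simp only [List.tail_cons] at hsupp
      -- p.support = q.support.tail ++ [none]
      have hsupp2 : (none : Option (Σ c, ι c)) :: p.support = q.support ++ [none] := by
        have := congrArg SimpleGraph.Walk.support hWeq
        rw [SimpleGraph.Walk.support_cons, SimpleGraph.Walk.support_concat] at this
        simpa [List.concat_eq_append] using this
      cases q with
      | nil =>
        have hlen : (SimpleGraph.Walk.cons h p).length = 1 := by
          rw [hWeq, SimpleGraph.Walk.length_concat]
          rfl
        have := hW.three_le_length
        omega
      | cons h2 q2 =>
        obtain ⟨c1', rfl⟩ := (glueT_adj_none T r).mp h2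
        have hps : p.support = q2.support ++ [none] := by
          rw [SimpleGraph.Walk.support_cons] at hsupp2
          simpa using hsupp2
        rw [hps, List.nodup_append] at hsupp
        have hq2none : (none : Option (Σ c, ι c)) ∉ q2.support := by
          intro hmem
          exact hsupp.2.2 _ hmem _ (by simp) rfl
        obtain ⟨b, rfl⟩ := glueT_fiber_of_walk T r q2 hq2none rfl
        have hb : b = r c1' := by
          obtain ⟨c2, he⟩ := (glueT_adj_none T r).mp (h'.symm)
          obtain ⟨rfl, hh⟩ := Sigma.mk.inj_iff.mp (Option.some.inj he)
          exact eq_of_heq hh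
        subst hb
        have hq2nil := tw_walk_loop_nil q2 hsupp.1
        subst hq2nil
        have hlen : (SimpleGraph.Walk.cons h p).length = 2 := by
          rw [hWeq, SimpleGraph.Walk.length_concat]
          rfl
        have := hW.three_le_length
        omega
  · -- the cycle avoids `none`: it lives in one fiber
    have hv : v ≠ none := fun hv => hn (hv ▸ w.start_mem_support)
    obtain (_ | ⟨c, a⟩) := v
    · exact hv rfl
    · obtain ⟨q, hq⟩ := glueT_walk_proj T r w hn a a rfl rfl
      rw [SimpleGraph.Walk.copy_rfl_rfl] at hq
      rw [← hq] at hw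
      exact (hT c).2 q
        ((SimpleGraph.Walk.map_isCycle_iff_of_injective (fiberHom_injective T r c)).mp hw)

end Glue

section Omega

lemma omegaClique_induce_le {V : Type} [Fintype V] (G : SimpleGraph V) (A : Set V) :
    omegaClique (G.induce A) ≤ omegaClique G := by
  classical
  apply csSup_le_csSup
  · refine ⟨Fintype.card V, ?_⟩
    rintro n ⟨s, hs⟩
    exact hs.2 ▸ Finset.card_le_univ s
  · exact ⟨0, ∅, by simp⟩
  · rintro n ⟨s, hs⟩
    refine ⟨s.image Subtype.val, ?_, ?_⟩
    · intro x hx y hy hxy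
      simp only [Finset.coe_image, Set.mem_image, Finset.mem_coe] at hx hy
      obtain ⟨a, ha, rfl⟩ := hx
      obtain ⟨b, hb, rfl⟩ := hy
      have hab : a ≠ b := fun h => hxy (by rw [h])
      exact hs.1 ha hb hab
    · rw [Finset.card_image_of_injective _ Subtype.val_injective, hs.2]

end Omega

section Main

lemma tw_induce_univ_connected {α : Type} {G : SimpleGraph α} (h : G.Connected) {s : Set α}
    (hs : s = Set.univ) : (G.induce s).Connected := by
  subst hs
  exact tw_connected_of_iso (SimpleGraph.induceUnivIso G).symm h

def GoodDecomp {V : Type} (G : SimpleGraph V) (ρ K : ℝ) (A B : Set V) : Prop :=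
  ∃ (ι : Type) (_ : Fintype ι) (T : SimpleGraph ι) (β : ι → Set V),
    T.IsTree ∧
    (∀ t, B ⊆ β t) ∧
    (∀ t, β t ⊆ A ∪ B) ∧
    (∀ v ∈ A, ∃ t, v ∈ β t) ∧
    (∀ u v : V, G.Adj u v → u ∈ A ∪ B → v ∈ A ∪ B → ∃ t, u ∈ β t ∧ v ∈ β t) ∧
    (∀ v ∈ A ∪ B, (T.induce {t | v ∈ β t}).Connected) ∧
    (∀ t, ((β t).ncard : ℝ) ≤ (B.ncard : ℝ) + K * (A.ncard : ℝ) ^ ρ)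

lemma gooddecomp_empty {V : Type} (G : SimpleGraph V) (ρ K : ℝ) (hρ : 0 < ρ) (B : Set V) :
    GoodDecomp G ρ K ∅ B := by
  have hT : (⊥ : SimpleGraph (Fin 1)).IsTree := by
    constructor
    · rw [SimpleGraph.connected_iff]
      exact ⟨fun u v => by rw [Subsingleton.elim u v], ⟨0⟩⟩
    · simp
  refine ⟨Fin 1, inferInstance, ⊥, fun _ => B, hT, fun _ => le_rfl, by simp, by simp,
    ?_, ?_, ?_⟩
  · intro u v _ hu hv
    simp only [Set.empty_union] at hu hv
    exact ⟨0, hu, hv⟩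
  · intro v hv
    refine tw_induce_univ_connected hT.1 ?_
    simp only [Set.empty_union] at hv
    exact Set.eq_univ_of_forall fun t => hv
  · intro t
    simp [Real.zero_rpow hρ.ne']

end Main

lemma gooddecomp_rec {V : Type} [Fintype V] (G : SimpleGraph V) (ρ c K : ℝ)
    (hρ : 0 < ρ) (hc0 : 0 ≤ c) (hcK : c ≤ K)
    (hgeo : c + K * (1 / 2 : ℝ) ^ ρ ≤ K)
    (hsep : ∀ A : Set V, ∃ S : Set V, S ⊆ A ∧ ((S.ncard : ℝ) ≤ c * (A.ncard : ℝ) ^ ρ ∧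
      ∀ C : (G.induce (A \ S)).ConnectedComponent, ((C.supp.ncard : ℝ)) ≤ (A.ncard : ℝ) / 2)) :
    ∀ (n : ℕ) (A B : Set V), A.ncard ≤ n → Disjoint A B → GoodDecomp G ρ K A B := by
  intro n
  induction n with
  | zero =>
    intro A B hA _
    have h0 : A.ncard = 0 := Nat.le_zero.mp hA
    rw [Set.ncard_eq_zero A.toFinite] at h0
    subst h0
    exact gooddecomp_empty G ρ K hρ B
  | succ n ih =>
    intro A B hA hAB
    by_cases hAe : A = ∅
    · subst hAe; exact gooddecomp_empty G ρ K hρ B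
    obtain ⟨S, hSA, hScard, hSbal⟩ := hsep A
    classical
    set A' := A \ S with hA'def
    have hApos : 1 ≤ A.ncard := by
      rw [Nat.one_le_iff_ne_zero]
      intro h0
      exact hAe ((Set.ncard_eq_zero A.toFinite).mp h0)
    have hAρ0 : (0:ℝ) ≤ (A.ncard : ℝ) ^ ρ := Real.rpow_nonneg (Nat.cast_nonneg _) ρ
    have hK0 : (0:ℝ) ≤ K := hc0.trans hcK
    haveI : Fintype ↥A' := Fintype.ofFinite _
    haveI : DecidableEq ↥A' := Classical.decEq _
    set GC := G.induce A' with hGCdef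
    have hsupsub : ∀ C : GC.ConnectedComponent, Subtype.val '' C.supp ⊆ A' := by
      rintro C x ⟨y, -, rfl⟩; exact y.2
    have hcomp : ∀ C : GC.ConnectedComponent,
        (Subtype.val '' C.supp).ncard ≤ n ∧ Disjoint (Subtype.val '' C.supp) (B ∪ S) := by
      intro C
      constructor
      · have hcard : ((Subtype.val '' C.supp).ncard : ℝ) ≤ (A.ncard : ℝ) / 2 := by
          rw [Set.ncard_image_of_injective _ Subtype.val_injective]
          exact hSbal C
        have h1 : (1:ℝ) ≤ (A.ncard : ℝ) := by exact_mod_cast hApos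
        have hlt : ((Subtype.val '' C.supp).ncard : ℝ) < (A.ncard : ℝ) := by linarith
        have := Nat.cast_lt (α := ℝ) |>.mp hlt
        omega
      · refine Set.disjoint_union_right.mpr ⟨?_, ?_⟩
        · exact Set.disjoint_of_subset_left ((hsupsub C).trans Set.diff_subset) hAB
        · exact Set.disjoint_of_subset_left (hsupsub C) disjoint_sdiff_self_left
    have hcomp' : ∀ C : GC.ConnectedComponent,
        GoodDecomp G ρ K (Subtype.val '' C.supp) (B ∪ S) :=
      fun C => ih _ _ (hcomp C).1 (hcomp C).2
    unfold GoodDecomp at hcomp'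
    choose ι instF T β hTree hBsub hBagsub hCover hEdge hConn hSize using hcomp'
    haveI : ∀ C, Nonempty (ι C) := fun C => (hTree C).1.nonempty
    let r : ∀ C, ι C := fun C => Classical.arbitrary _
    let βg : Option (Σ C, ι C) → Set V := fun t => t.elim (B ∪ S) (fun p => β p.1 p.2)
    have hmemA' : ∀ {v : V} (hv : v ∈ A') {C : GC.ConnectedComponent},
        v ∈ Subtype.val '' C.supp ↔ GC.connectedComponentMk ⟨v, hv⟩ = C := by
      intro v hv C
      constructor
      · rintro ⟨y, hy, hyv⟩
        obtain rfl : y = ⟨v, hv⟩ := Subtype.val_injective hyv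
        exact (SimpleGraph.ConnectedComponent.mem_supp_iff _ _).mp hy
      · intro h
        exact ⟨⟨v, hv⟩, (SimpleGraph.ConnectedComponent.mem_supp_iff _ _).mpr h, rfl⟩
    unfold GoodDecomp
    refine ⟨Option (Σ C, ι C), Fintype.ofFinite _, glueT T r, βg,
      glueT_isTree T r hTree, ?_, ?_, ?_, ?_, ?_, ?_⟩
    · rintro (_ | ⟨C, x⟩)
      · exact Set.subset_union_left
      · exact Set.subset_union_left.trans (hBsub C x)
    · rintro (_ | ⟨C, x⟩)
      · exact Set.union_subset Set.subset_union_right (hSA.trans Set.subset_union_left)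
      · refine (hBagsub C x).trans (Set.union_subset ?_ ?_)
        · exact fun z hz => Or.inl (Set.diff_subset (hsupsub C hz))
        · exact Set.union_subset Set.subset_union_right (hSA.trans Set.subset_union_left)
    · intro v hv
      by_cases hvS : v ∈ S
      · exact ⟨none, Or.inr hvS⟩
      · have hv' : v ∈ A' := ⟨hv, hvS⟩
        obtain ⟨x, hx⟩ := hCover _ v ((hmemA' hv').mpr rfl)
        exact ⟨some ⟨_, x⟩, hx⟩
    · intro u v huv hu hv
      by_cases huA : u ∈ A'
      · by_cases hvA : v ∈ A'
        · have hreach : GC.connectedComponentMk ⟨u, huA⟩ = GC.connectedComponentMk ⟨v, hvA⟩ :=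
            SimpleGraph.ConnectedComponent.sound (SimpleGraph.Adj.reachable huv)
          obtain ⟨t0, ht0⟩ := hEdge (GC.connectedComponentMk ⟨v, hvA⟩) u v huv
            (Or.inl ((hmemA' huA).mpr hreach)) (Or.inl ((hmemA' hvA).mpr rfl))
          exact ⟨some ⟨_, t0⟩, ht0⟩
        · have hvBS : v ∈ B ∪ S := by
            rcases hv with hv | hv
            · by_cases hvS : v ∈ S
              · exact Or.inr hvS
              · exact absurd ⟨hv, hvS⟩ hvA
            · exact Or.inl hv
          obtain ⟨t0, ht0⟩ := hEdge (GC.connectedComponentMk ⟨u, huA⟩) u v huv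
            (Or.inl ((hmemA' huA).mpr rfl)) (Or.inr hvBS)
          exact ⟨some ⟨_, t0⟩, ht0⟩
      · have huBS : u ∈ B ∪ S := by
          rcases hu with hu | hu
          · by_cases huS : u ∈ S
            · exact Or.inr huS
            · exact absurd ⟨hu, huS⟩ huA
          · exact Or.inl hu
        by_cases hvA : v ∈ A'
        · obtain ⟨t0, ht0⟩ := hEdge (GC.connectedComponentMk ⟨v, hvA⟩) u v huv
            (Or.inr huBS) (Or.inl ((hmemA' hvA).mpr rfl))
          exact ⟨some ⟨_, t0⟩, ht0⟩
        · have hvBS : v ∈ B ∪ S := by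
            rcases hv with hv | hv
            · by_cases hvS : v ∈ S
              · exact Or.inr hvS
              · exact absurd ⟨hv, hvS⟩ hvA
            · exact Or.inl hv
          exact ⟨none, huBS, hvBS⟩
    · intro v hv
      by_cases hvBS : v ∈ B ∪ S
      · refine tw_induce_univ_connected (glueT_connected T r fun C => (hTree C).1) ?_
        apply Set.eq_univ_of_forall
        rintro (_ | ⟨C, x⟩)
        · exact hvBS
        · exact hBsub C x hvBS
      · have hvA : v ∈ A' := by
          rcases hv with hv | hv
          · exact ⟨hv, fun hvS => hvBS (Or.inr hvS)⟩
          · exact absurd (Or.inl hv) hvBS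
        have key := hConn (GC.connectedComponentMk ⟨v, hvA⟩) v ((Or.inl ((hmemA' hvA).mpr rfl)))
        refine tw_connected_induce_of_maps
          (G := T (GC.connectedComponentMk ⟨v, hvA⟩))
          (fun x : ι (GC.connectedComponentMk ⟨v, hvA⟩) =>
            (some ⟨GC.connectedComponentMk ⟨v, hvA⟩, x⟩ : Option (Σ C, ι C))) ?_ ?_ _ ?_ ?_
        · intro a b h
          exact eq_of_heq (Sigma.mk.inj_iff.mp (Option.some.inj h)).2
        · intro a b
          exact (glueT_adj_some_some T r).symm
        · rintro (_ | ⟨C, x⟩) ht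
          · exact absurd ht hvBS
          · have hm : v ∈ Subtype.val '' C.supp ∪ (B ∪ S) := hBagsub C x ht
            have hvC : v ∈ Subtype.val '' C.supp := hm.resolve_right hvBS
            obtain rfl : C = GC.connectedComponentMk ⟨v, hvA⟩ := ((hmemA' hvA).mp hvC).symm
            exact ⟨x, rfl⟩
        · exact key
    · have hBS : ((B ∪ S).ncard : ℝ) ≤ (B.ncard : ℝ) + c * (A.ncard : ℝ) ^ ρ := by
        have h1 : (B ∪ S).ncard ≤ B.ncard + S.ncard := Set.ncard_union_le B S
        have h1' : ((B ∪ S).ncard : ℝ) ≤ (B.ncard : ℝ) + (S.ncard : ℝ) := by exact_mod_cast h1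
        linarith
      rintro (_ | ⟨C, x⟩)
      · have : c * (A.ncard : ℝ) ^ ρ ≤ K * (A.ncard : ℝ) ^ ρ :=
          mul_le_mul_of_nonneg_right hcK hAρ0
        show ((B ∪ S).ncard : ℝ) ≤ (B.ncard : ℝ) + K * (A.ncard : ℝ) ^ ρ
        linarith
      · show ((β C x).ncard : ℝ) ≤ (B.ncard : ℝ) + K * (A.ncard : ℝ) ^ ρ
        have h1 := hSize C x
        have h2 : (((Subtype.val '' C.supp).ncard : ℝ)) ^ ρ ≤ ((A.ncard : ℝ) / 2) ^ ρ := by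
          apply Real.rpow_le_rpow (Nat.cast_nonneg _) _ hρ.le
          rw [Set.ncard_image_of_injective _ Subtype.val_injective]
          exact hSbal C
        have h3 : ((A.ncard : ℝ) / 2) ^ ρ = (A.ncard : ℝ) ^ ρ * (1 / 2 : ℝ) ^ ρ := by
          rw [div_eq_mul_one_div]
          exact Real.mul_rpow (Nat.cast_nonneg _) (by norm_num)
        have h4 : K * (((Subtype.val '' C.supp).ncard : ℝ)) ^ ρ
            ≤ K * ((A.ncard : ℝ) ^ ρ * (1 / 2 : ℝ) ^ ρ) := by
          rw [← h3]
          exact mul_le_mul_of_nonneg_left h2 hK0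
        have h5 : c * (A.ncard : ℝ) ^ ρ + K * ((A.ncard : ℝ) ^ ρ * (1 / 2 : ℝ) ^ ρ)
            ≤ K * (A.ncard : ℝ) ^ ρ := by
          have := mul_le_mul_of_nonneg_right hgeo hAρ0
          calc c * (A.ncard : ℝ) ^ ρ + K * ((A.ncard : ℝ) ^ ρ * (1 / 2 : ℝ) ^ ρ)
              = (c + K * (1 / 2 : ℝ) ^ ρ) * (A.ncard : ℝ) ^ ρ := by ring
            _ ≤ K * (A.ncard : ℝ) ^ ρ := this
        linarith


/-- If `G` on `n` vertices admits balanced `(η,μ,ρ)`-separators with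
`0 < ρ < 1`, then `tw(G) ≤ (2^ρ · η · ω(G)^μ)/(2^ρ − 1) · n^ρ`. -/
theorem stmt_1 {V : Type} [Fintype V] (G : SimpleGraph V) (η μ ρ : ℝ)
    (hη : 0 ≤ η) (hμ : 0 ≤ μ) (hρ0 : 0 < ρ) (hρ1 : ρ < 1)
    (hsep : HasBalancedSeparators G η μ ρ) :
    (treewidth G : ℝ) ≤
      2 ^ ρ * η * (omegaClique G : ℝ) ^ μ / (2 ^ ρ - 1) * (Fintype.card V : ℝ) ^ ρ := by
  classical
  set ω : ℝ := (omegaClique G : ℝ) with hω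
  set cR : ℝ := η * ω ^ μ with hcR
  set K : ℝ := 2 ^ ρ * η * ω ^ μ / (2 ^ ρ - 1) with hK
  have h2ρ : (1:ℝ) < 2 ^ ρ :=
    (Real.one_lt_rpow_iff_of_pos (by norm_num)).mpr (Or.inl ⟨by norm_num, hρ0⟩)
  have hd : (0:ℝ) < 2 ^ ρ - 1 := by linarith
  have hc0 : (0:ℝ) ≤ cR := mul_nonneg hη (Real.rpow_nonneg (Nat.cast_nonneg _) μ)
  have hKeq : K = cR * (2 ^ ρ / (2 ^ ρ - 1)) := by
    rw [hK, hcR]; field_simp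
  have hcK : cR ≤ K := by
    rw [hKeq]
    refine le_mul_of_one_le_right hc0 ?_
    rw [le_div_iff₀ hd]
    linarith
  have hhalf : ((1:ℝ) / 2) ^ ρ = 1 / 2 ^ ρ := by
    rw [Real.div_rpow (by norm_num) (by norm_num), Real.one_rpow]
  have hgeo : cR + K * ((1:ℝ) / 2) ^ ρ ≤ K := by
    have h2ρ0 : (2:ℝ) ^ ρ ≠ 0 := by positivity
    have : cR + K * ((1:ℝ) / 2) ^ ρ = K := by
      rw [hhalf, hKeq]
      field_simp
      ring
    exact this.le
  have hsep' : ∀ A : Set V, ∃ S : Set V, S ⊆ A ∧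
      ((S.ncard : ℝ) ≤ cR * (A.ncard : ℝ) ^ ρ ∧
      ∀ C : (G.induce (A \ S)).ConnectedComponent, ((C.supp.ncard : ℝ)) ≤ (A.ncard : ℝ) / 2) := by
    intro A
    obtain ⟨S, hSA, hScard, hSbal⟩ := hsep A
    refine ⟨S, hSA, ?_, hSbal⟩
    refine hScard.trans ?_
    have hroot : ((omegaClique (G.induce A) : ℝ)) ^ μ ≤ ω ^ μ := by
      rw [hω]
      exact Real.rpow_le_rpow (Nat.cast_nonneg _) (Nat.cast_le.mpr (omegaClique_induce_le G A)) hμ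
    have hAρ0 : (0:ℝ) ≤ (A.ncard : ℝ) ^ ρ := Real.rpow_nonneg (Nat.cast_nonneg _) ρ
    refine mul_le_mul_of_nonneg_right ?_ hAρ0
    rw [hcR]
    exact mul_le_mul_of_nonneg_left hroot hη
  have main := gooddecomp_rec G ρ cR K hρ0 hc0 hcK hgeo hsep'
    ((Set.univ : Set V).ncard) Set.univ ∅ le_rfl (by simp)
  unfold GoodDecomp at main
  obtain ⟨ι, instι, T, β, hTree, hB, hBag, hCov, hEdge, hConn, hSize⟩ := main
  haveI := instι
  set nn := Fintype.card ι with hnn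
  set e : Fin nn ≃ ι := (Fintype.equivFin ι).symm with he
  set T' : SimpleGraph (Fin nn) := T.comap e with hT'
  set β' : Fin nn → Set V := fun i => β (e i) with hβ'
  have hK0 : (0:ℝ) ≤ K := hc0.trans hcK
  have hbound : (0:ℝ) ≤ K * (Fintype.card V : ℝ) ^ ρ :=
    mul_nonneg hK0 (Real.rpow_nonneg (Nat.cast_nonneg _) ρ)
  set w : ℕ := ⌊K * (Fintype.card V : ℝ) ^ ρ⌋₊ with hw
  have hsizes : ∀ t : ι, ((β t).ncard : ℝ) ≤ K * (Fintype.card V : ℝ) ^ ρ := by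
    intro t
    have := hSize t
    simpa [Set.ncard_univ, Nat.card_eq_fintype_card] using this
  have htw : treewidth G ≤ w := by
    apply Nat.sInf_le
    refine ⟨nn, T', β', ⟨?_, ?_, ?_, ?_⟩, ?_⟩
    · refine tw_isTree_of_iso (G := T) ?_ hTree
      exact ⟨e.symm, by intro a b; show T.Adj (e (e.symm _)) (e (e.symm _)) ↔ _; simp⟩
    · intro v
      obtain ⟨t, ht⟩ := hCov v trivial
      exact ⟨e.symm t, by simp [hβ', ht]⟩
    · intro u v huv
      obtain ⟨t, ht⟩ := hEdge u v huv (Or.inl trivial) (Or.inl trivial)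
      exact ⟨e.symm t, by simp [hβ', ht.1, ht.2]⟩
    · intro v
      have hCv := hConn v (Or.inl trivial)
      refine tw_connected_induce_of_maps (G := T) (H := T') (⇑e.symm) ?_ ?_ _ ?_ ?_
      · exact e.symm.injective
      · intro a b
        show T.Adj a b ↔ T.Adj (e (e.symm a)) (e (e.symm b))
        simp
      · exact fun x _ => ⟨e x, by simp⟩
      · rw [show (⇑e.symm ⁻¹' {i | v ∈ β' i}) = {t | v ∈ β t} from by
          ext t; simp [hβ']]
        exact hCv
    · intro t
      have h1 : ((β' t).ncard : ℝ) ≤ K * (Fintype.card V : ℝ) ^ ρ := hsizes (e t)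
      have := Nat.le_floor h1
      omega
  calc (treewidth G : ℝ) ≤ (w : ℝ) := Nat.cast_le.mpr htw
    _ ≤ K * (Fintype.card V : ℝ) ^ ρ := Nat.floor_le hbound
    _ = _ := by rw [hK]
end

section
/- Let 𝓕 be a finite set of graphs with γ = max_{F∈𝓕}|V(F)|, let G be a graph, let σ be a linear ordering of V(G), and let δ > wcol_γ(G,σ) be a positive integer. Let (X,F,f) be an (𝓕,δ)-heavy core in G and let x, y ∈ X. If there exists a simple path π in F between f(x) and f(y) of length ℓ such that y is the largest vertex of f^{-1}(V(π)) with respect to σ, then y ∈ WR_ℓ(G,σ,x). -/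
/-- for an `(𝓕,δ)`-heavy core `(X,F,f)` with `δ > wcol_γ(G,σ)` and `x, y ∈ X`,
if there is a simple path `q` in `F` between `f(x)` and `f(y)` of length `ℓ` on which `y` is
the largest vertex of `f⁻¹(V(q))` with respect to `σ`, then `y ∈ WR_ℓ(G,σ,x)`. -/
theorem stmt_4 {V ι : Type} [Fintype V] [Fintype ι] {W : ι → Type} [∀ i, Fintype (W i)]
    (F : ∀ i, SimpleGraph (W i)) (G : SimpleGraph V)
    (γ : ℕ) (hγ : γ = Finset.univ.sup fun i => Fintype.card (W i))
    (σ : V ↪ ℕ) (δ : ℕ) (hδpos : 0 < δ) (hδ : wcolOn G σ γ < δ)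
    (i₀ : ι) (X : Set V) (f : ↥X → W i₀)
    (hHC : IsHeavyCore γ δ G (F i₀) X f)
    (x y : V) (hx : x ∈ X) (hy : y ∈ X) (ℓ : ℕ)
    (q : (F i₀).Walk (f ⟨x, hx⟩) (f ⟨y, hy⟩)) (hq : q.IsPath) (hqlen : q.length = ℓ)
    (hmax : ∀ (z : V) (hz : z ∈ X), f ⟨z, hz⟩ ∈ q.support → σ z ≤ σ y) :
    y ∈ WR G σ ℓ x := by
  classical
  by_contra hyWR
  obtain ⟨hfinj, φ, hcopy, hfix, hsun⟩ := hHC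
  obtain ⟨hsunX, hsundisj⟩ := hsun
  have hcardW : Fintype.card (W i₀) ≤ γ := by
    subst hγ; exact Finset.le_sup (f := fun i => Fintype.card (W i)) (Finset.mem_univ i₀)
  have hcardpos : 0 < Fintype.card (W i₀) := Fintype.card_pos_iff.mpr ⟨f ⟨x, hx⟩⟩
  have hℓγ : ℓ ≤ γ := by
    have := hq.length_lt
    omega
  have hγ1 : 1 ≤ γ := by omega
  -- for each j, build the image path and find a big vertex outside X
  have key : ∀ j : Fin (γ ^ X.ncard * δ), ∃ u, u ∈ WR G σ γ x ∧ u ∈ Set.range (φ j) \ X := by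
    intro j
    have hinj : Function.Injective (φ j) := (hcopy j).1
    let hom : F i₀ →g G := ⟨φ j, fun h => (hcopy j).2 _ _ h⟩
    let p : G.Walk x y := (q.map hom).copy (hfix j ⟨x, hx⟩) (hfix j ⟨y, hy⟩)
    have hpPath : p.IsPath :=
      (SimpleGraph.Walk.isPath_copy _ _ _).mpr
        (SimpleGraph.Walk.map_isPath_of_injective hinj hq)
    have hplen : p.length = ℓ := by
      simp only [p, SimpleGraph.Walk.length_copy, SimpleGraph.Walk.length_map, hqlen]
    have hsupp : p.support = q.support.map (φ j) := by
      simp only [p, SimpleGraph.Walk.support_copy, SimpleGraph.Walk.support_map]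
      rfl
    obtain ⟨u, hu_mem, hu_max⟩ := Finset.exists_max_image p.support.toFinset σ
      ⟨x, List.mem_toFinset.mpr p.start_mem_support⟩
    have hu_supp : u ∈ p.support := List.mem_toFinset.mp hu_mem
    have hu_gt : σ y < σ u := by
      by_contra hle
      push_neg at hle
      exact hyWR ⟨p, hpPath, le_of_eq hplen, fun w hw =>
        le_trans (hu_max w (List.mem_toFinset.mpr hw)) hle⟩
    obtain ⟨a, ha_mem, ha_eq⟩ := List.mem_map.mp (hsupp ▸ hu_supp)
    have huX : u ∉ X := by
      intro huX
      have h1 : φ j (f ⟨u, huX⟩) = u := hfix j ⟨u, huX⟩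
      have h2 : a = f ⟨u, huX⟩ := hinj (ha_eq.trans h1.symm)
      have := hmax u huX (h2 ▸ ha_mem)
      omega
    refine ⟨u, ⟨p.takeUntil u hu_supp, hpPath.takeUntil hu_supp, ?_, ?_⟩,
      ⟨a, ha_eq⟩, huX⟩
    · exact le_trans (SimpleGraph.Walk.length_takeUntil_le p hu_supp)
        (hplen ▸ hℓγ)
    · intro w hw
      exact hu_max w (List.mem_toFinset.mpr
        (SimpleGraph.Walk.support_takeUntil_subset p hu_supp hw))
  choose u hu hmem using key
  have huinj : Function.Injective u := by
    intro j j' hjj'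
    by_contra hne
    exact (Set.disjoint_left.mp (hsundisj hne)) (hmem j) (hjj' ▸ hmem j')
  have hsub : Set.range u ⊆ WR G σ γ x := by
    rintro _ ⟨j, rfl⟩; exact hu j
  have h1 : γ ^ X.ncard * δ ≤ (WR G σ γ x).ncard := by
    have hr : (Set.range u).ncard = γ ^ X.ncard * δ := by
      rw [← Nat.card_coe_set_eq, Nat.card_range_of_injective huinj,
        Nat.card_eq_fintype_card, Fintype.card_fin]
    exact hr ▸ Set.ncard_le_ncard hsub (Set.toFinite _)
  have h2 : (WR G σ γ x).ncard ≤ wcolOn G σ γ :=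
    Finset.le_sup (f := fun v => (WR G σ γ v).ncard) (Finset.mem_univ x)
  have h3 : δ ≤ γ ^ X.ncard * δ := Nat.le_mul_of_pos_left δ (Nat.pow_pos hγ1)
  omega
end

section
/- Let 𝓕 be a finite set of graphs with γ = max_{F∈𝓕}|V(F)|, let G be a graph, let δ > 0 and p ≥ γ^γ·δ be integers, and let F ∈ 𝓕. Suppose (X_1,F,f_1), …, (X_p,F,f_p) are (𝓕,δ)-heavy cores in G such that |X_1| = ⋯ = |X_p|, the sets X_1,…,X_p form a sunflower with core K, and there exists f : K → V(F) with f = (f_i)|_K for all i ∈ [p]. Then for every i ∈ [p] and every set 𝓒 of connected components of F − f(K), the triple (X_i^𝓒, F, f_i^𝓒) is an (𝓕,δ)-heavy core in G, where X_i^𝓒 = K ∪ (∪_{C∈𝓒} f_i^{-1}(V(C))) and f_i^𝓒 = (f_i)|_{X_i^𝓒}. -/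
private lemma pick_lemma {V : Type} {N : ℕ} (s : Fin N → Set V) (X B : Set V)
    (hfin : (B \ X).Finite)
    (hdisj : Pairwise fun a b => Disjoint (s a \ X) (s b \ X))
    (hlt : (B \ X).ncard < N) : ∃ a, Disjoint (s a \ X) B := by
  by_contra h
  push_neg at h
  have hg : ∀ a : Fin N, ∃ v, v ∈ (s a \ X) ∧ v ∈ B := by
    intro a
    exact Set.not_disjoint_iff.1 (h a)
  choose g hg1 hg2 using hg
  have hinj : Function.Injective g := by
    intro a b hab
    by_contra hne
    exact Set.disjoint_left.1 (hdisj hne) (hg1 a) (hab ▸ hg1 b)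
  have hsubr : Set.range g ⊆ B \ X := by
    rintro _ ⟨a, rfl⟩
    exact ⟨hg2 a, (hg1 a).2⟩
  have hN : N ≤ (B \ X).ncard := by
    have h1 : (Set.range g).ncard = N := by
      rw [← Nat.card_coe_set_eq, Nat.card_range_of_injective hinj,
        Nat.card_eq_fintype_card, Fintype.card_fin]
    rw [← h1]
    exact Set.ncard_le_ncard hsubr hfin
  omega

private lemma ncard_iUnion_le_aux {V : Type} [Fintype V] {c : ℕ} :
    ∀ {T : ℕ} (s : Fin T → Set V), (∀ t, (s t).ncard ≤ c) → (⋃ t, s t).ncard ≤ T * c := by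
  intro T
  induction T with
  | zero => intro s _; simp
  | succ T ih =>
    intro s hs
    have hsplit : (⋃ t : Fin (T+1), s t) = (⋃ t : Fin T, s t.castSucc) ∪ s (Fin.last T) := by
      ext v
      simp only [Set.mem_iUnion, Set.mem_union]
      constructor
      · rintro ⟨t, ht⟩
        rcases Fin.eq_castSucc_or_eq_last t with ⟨t', rfl⟩ | rfl
        · exact Or.inl ⟨t', ht⟩
        · exact Or.inr ht
      · rintro (⟨t, ht⟩ | ht)
        · exact ⟨t.castSucc, ht⟩
        · exact ⟨Fin.last T, ht⟩
    rw [hsplit]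
    calc ((⋃ t : Fin T, s t.castSucc) ∪ s (Fin.last T)).ncard
        ≤ (⋃ t : Fin T, s t.castSucc).ncard + (s (Fin.last T)).ncard := Set.ncard_union_le _ _
      _ ≤ T * c + c := Nat.add_le_add (ih _ (fun t => hs _)) (hs _)
      _ = (T + 1) * c := by ring

private lemma arith_key {γ δ m d w : ℕ} (hδ : 0 < δ) (hγ : 0 < γ) (hwγ : w ≤ γ)
    (hd : m + d = w) : γ ^ m * δ * d + m ≤ γ ^ (m + 1) * δ := by
  have h1 : 1 ≤ γ ^ m * δ := Nat.one_le_iff_ne_zero.2 (Nat.mul_ne_zero (Nat.pos_iff_ne_zero.1 (Nat.pow_pos hγ)) (Nat.pos_iff_ne_zero.1 hδ))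
  have h2 : γ ^ m * δ * (m + d) ≤ γ ^ m * δ * γ := Nat.mul_le_mul_left _ (by omega)
  have h3 : m ≤ γ ^ m * δ * m := Nat.le_mul_of_pos_left m h1
  have h4 : γ ^ m * δ * (m + d) = γ ^ m * δ * m + γ ^ m * δ * d := by ring
  have h5 : γ ^ (m + 1) * δ = γ ^ m * δ * γ := by ring
  linarith

private lemma arith_one {γ δ m n w d T : ℕ} (hδ : 0 < δ) (hmn : m < n) (hnw : n ≤ w)
    (hwγ : w ≤ γ) (hd : m + d = w) (hT : T + 1 ≤ γ ^ m * δ) :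
    T * d + m < γ ^ γ * δ := by
  have hγ : 0 < γ := by omega
  have hd1 : 1 ≤ d := by omega
  have hkey := arith_key hδ hγ hwγ hd
  have hTd : (T + 1) * d ≤ γ ^ m * δ * d := Nat.mul_le_mul_right d hT
  have hpow : γ ^ (m + 1) ≤ γ ^ γ := Nat.pow_le_pow_right hγ (by omega)
  have hpow' : γ ^ (m + 1) * δ ≤ γ ^ γ * δ := Nat.mul_le_mul_right δ hpow
  have hexp : (T + 1) * d = T * d + d := by ring
  linarith

private lemma arith_two {γ δ m n w d T : ℕ} (hδ : 0 < δ) (hγ2 : 2 ≤ γ) (hmn : m < n) (hnw : n ≤ w)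
    (hwγ : w ≤ γ) (hd : m + d = w) (hT : T + 1 ≤ γ ^ m * δ) :
    T * d + n < γ ^ n * δ := by
  have hγ : 0 < γ := by omega
  rcases Nat.eq_zero_or_pos m with hm0 | hm1
  · subst hm0
    -- m = 0 : d = w, T + 1 ≤ δ
    simp only [pow_zero, one_mul] at hT
    have hn1 : 1 ≤ n := by omega
    have hγn : n < γ ^ n := Nat.lt_pow_self (by omega)
    have hdγn : d ≤ γ ^ n := by
      calc d = w := by omega
        _ ≤ γ := hwγ
        _ = γ ^ 1 := (pow_one γ).symm
        _ ≤ γ ^ n := Nat.pow_le_pow_right hγ hn1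
    have h1 : γ ^ n * (T + 1) ≤ γ ^ n * δ := Nat.mul_le_mul_left _ hT
    have h2 : γ ^ n * (T + 1) = γ ^ n * T + γ ^ n := by ring
    have h3 : d * T ≤ γ ^ n * T := Nat.mul_le_mul_right T hdγn
    have h4 : d * T = T * d := by ring
    linarith
  · -- m ≥ 1
    have hγm2 : 2 ≤ γ ^ m := by
      calc 2 ≤ γ := hγ2
        _ = γ ^ 1 := (pow_one γ).symm
        _ ≤ γ ^ m := Nat.pow_le_pow_right hγ hm1
    have h2 : 2 ≤ γ ^ m * δ := by
      have := Nat.mul_le_mul hγm2 hδ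
      omega
    have hm2 : m + 1 ≤ γ ^ m * δ * m := by
      have := Nat.mul_le_mul h2 (le_refl m)
      omega
    have hTd : (T + 1) * d ≤ γ ^ m * δ * d := Nat.mul_le_mul_right d hT
    have h5 : γ ^ m * δ * (m + d) ≤ γ ^ m * δ * γ := Nat.mul_le_mul_left _ (by omega)
    have h4 : γ ^ m * δ * (m + d) = γ ^ m * δ * m + γ ^ m * δ * d := by ring
    have h5' : γ ^ (m + 1) * δ = γ ^ m * δ * γ := by ring
    have hpow : γ ^ (m + 1) ≤ γ ^ n := Nat.pow_le_pow_right hγ (by omega)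
    have hpow' : γ ^ (m + 1) * δ ≤ γ ^ n * δ := Nat.mul_le_mul_right δ hpow
    have hdn : n ≤ m + d := by omega
    have hexp : (T + 1) * d = T * d + d := by ring
    linarith

private lemma arith_three {γ δ m n w d e T : ℕ} (hδ : 0 < δ) (hmn : m < n) (hnw : n ≤ w)
    (hwγ : w ≤ γ) (hd : m + d = w) (he : e + n = w) (hT : T + 1 ≤ γ ^ m * δ) :
    T * d + m + e < γ ^ n * δ := by
  have hγ : 0 < γ := by omega
  have hkey := arith_key hδ hγ hwγ hd
  have hTd : (T + 1) * d ≤ γ ^ m * δ * d := Nat.mul_le_mul_right d hT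
  have hpow : γ ^ (m + 1) ≤ γ ^ n := Nat.pow_le_pow_right hγ (by omega)
  have hpow' : γ ^ (m + 1) * δ ≤ γ ^ n * δ := Nat.mul_le_mul_right δ hpow
  have hed : e < d := by omega
  have hexp : (T + 1) * d = T * d + d := by ring
  linarith


/-- given `(𝓕,δ)`-heavy cores `(X₁,F,f₁),…,(X_p,F,f_p)` of the same size, with
`p ≥ γ^γ·δ`, forming a sunflower with core `K` and agreeing on `K` (`f = fᵢ|_K`), for every
`j` and every set `𝓒` of connected components of `F − f(K)`, the triple
`(K ∪ ⋃_{C ∈ 𝓒} f_j⁻¹(V(C)), F, f_j` restricted`)` is an `(𝓕,δ)`-heavy core in `G`. -/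
theorem stmt_5 {V ι : Type} [Fintype V] [Fintype ι] {W : ι → Type} [∀ i, Fintype (W i)]
    (F : ∀ i, SimpleGraph (W i)) (G : SimpleGraph V)
    (γ : ℕ) (hγ : γ = Finset.univ.sup fun i => Fintype.card (W i))
    (δ p : ℕ) (hδ : 0 < δ) (hp : γ ^ γ * δ ≤ p)
    (i₀ : ι) (X : Fin p → Set V) (f : ∀ j, ↥(X j) → W i₀)
    (hHC : ∀ j, IsHeavyCore γ δ G (F i₀) (X j) (f j))
    (hsize : ∀ j j', (X j).ncard = (X j').ncard)
    (K : Set V) (hsun : IsSunflower X K)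
    (fK : ↥K → W i₀)
    (hfK : ∀ (j : Fin p) (x : V) (hxK : x ∈ K), fK ⟨x, hxK⟩ = f j ⟨x, hsun.1 j hxK⟩)
    (j : Fin p)
    (𝓒 : Set ((F i₀).induce (Set.range fK)ᶜ).ConnectedComponent) :
    ∃ hsub : K ∪ {v : V | ∃ hv : v ∈ X j,
        f j ⟨v, hv⟩ ∈ ⋃ C ∈ 𝓒, Subtype.val '' C.supp} ⊆ X j,
      IsHeavyCore γ δ G (F i₀)
        (K ∪ {v : V | ∃ hv : v ∈ X j,
          f j ⟨v, hv⟩ ∈ ⋃ C ∈ 𝓒, Subtype.val '' C.supp})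
        (fun z => f j ⟨(z : V), hsub z.2⟩) := by
  classical
  obtain ⟨hinjj, hwitj⟩ := hHC j
  set X' : Set V := K ∪ {v : V | ∃ hv : v ∈ X j,
      f j ⟨v, hv⟩ ∈ ⋃ C ∈ 𝓒, Subtype.val '' C.supp} with hX'def
  have hsub : X' ⊆ X j := by
    intro v hv
    rcases hv with hvK | ⟨hv, -⟩
    · exact hsun.1 j hvK
    · exact hv
  refine ⟨hsub, ?_, ?_⟩
  · -- injectivity of the restricted map
    intro a b hab
    have h2 : ((⟨(a : V), hsub a.2⟩ : ↥(X j)) : V) = ((⟨(b : V), hsub b.2⟩ : ↥(X j)) : V) :=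
      congrArg Subtype.val (hinjj hab)
    exact Subtype.ext h2
  set n := (X j).ncard with hn
  set m := X'.ncard with hm
  set w := Fintype.card (W i₀) with hwdef
  obtain ⟨φJ, hJcopy, hJfix, hJsun⟩ := hwitj
  have hwγ : w ≤ γ := by
    rw [hwdef, hγ]
    exact Finset.le_sup (f := fun i => Fintype.card (W i)) (Finset.mem_univ i₀)
  have hnw : n ≤ w := by
    rw [hn, hwdef, ← Nat.card_coe_set_eq, ← Nat.card_eq_fintype_card]
    exact Nat.card_le_card_of_injective (f j) hinjj
  have hmn : m ≤ n := Set.ncard_le_ncard hsub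
  have hKX' : K ⊆ X' := Set.subset_union_left
  have hrange_ncard : ∀ g : W i₀ → V, Function.Injective g → (Set.range g).ncard = w := by
    intro g hg
    rw [← Nat.card_coe_set_eq, Nat.card_range_of_injective hg, Nat.card_eq_fintype_card]
  by_cases hXeq : X' = X j
  · -- trivial case: X' = X j
    have hNum : γ ^ m * δ = γ ^ n * δ := by rw [hm, hn, hXeq]
    refine ⟨fun t => φJ (Fin.cast hNum t), fun t => hJcopy _,
      fun t x => hJfix _ ⟨(x : V), hsub x.2⟩, ?_, ?_⟩
    · intro t
      rw [hXeq]
      exact hJsun.1 _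
    · intro t t' hne
      have hne' : Fin.cast hNum t ≠ Fin.cast hNum t' := fun h => hne (Fin.cast_injective hNum h)
      have h2 := hJsun.2 hne'
      rw [hXeq]
      exact h2
  · have hmltn : m < n := Set.ncard_lt_ncard ⟨hsub, fun h => hXeq (le_antisymm hsub h)⟩
    have hn1 : 1 ≤ n := by omega
    have hγ1 : 0 < γ := by omega
    by_cases hγ2 : 2 ≤ γ
    · -- main case : 2 ≤ γ
      have hd : m + (w - m) = w := by omega
      have he : (w - n) + n = w := by omega
      set d := w - m with hddef
      set e := w - n with hedef
      set bigU : Set (W i₀) := ⋃ C ∈ 𝓒, Subtype.val '' C.supp with hbigUdef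
      set D : Set (W i₀) := Set.range fK ∪ bigU with hDdef
      -- basic facts about bigU / D
      have hbigU_nfK : ∀ u ∈ bigU, u ∉ Set.range fK := by
        intro u hu
        rw [hbigUdef] at hu
        simp only [Set.mem_iUnion, Set.mem_image] at hu
        obtain ⟨C, hC, c, hcs, hcv⟩ := hu
        exact hcv ▸ c.2
      have hedge : ∀ u1 u2, (F i₀).Adj u1 u2 → u1 ∈ bigU → u2 ∉ Set.range fK → u2 ∈ bigU := by
        intro u1 u2 hA h1 h2
        rw [hbigUdef] at h1 ⊢
        simp only [Set.mem_iUnion, Set.mem_image] at h1 ⊢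
        obtain ⟨C, hC, c, hcs, hcv⟩ := h1
        have h1' : u1 ∉ Set.range fK := hcv ▸ c.2
        have hceq : c = ⟨u1, h1'⟩ := Subtype.ext hcv
        have hadj : ((F i₀).induce (Set.range fK)ᶜ).Adj ⟨u1, h1'⟩ ⟨u2, h2⟩ := by
          simp only [SimpleGraph.comap_adj, Function.Embedding.coe_subtype]
          exact hA
        refine ⟨C, hC, ⟨u2, h2⟩, ?_, rfl⟩
        rw [SimpleGraph.ConnectedComponent.mem_supp_iff]
        have hmk := SimpleGraph.ConnectedComponent.sound hadj.symm.reachable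
        rw [hmk]
        rw [← SimpleGraph.ConnectedComponent.mem_supp_iff]
        exact hceq ▸ hcs
      have hX'D : ∀ (x : V) (hx : x ∈ X'), f j ⟨x, hsub hx⟩ ∈ D := by
        intro x hx
        rcases hx with hK | ⟨hv, hmem⟩
        · exact Or.inl ⟨⟨x, hK⟩, hfK j x hK⟩
        · exact Or.inr hmem
      have hD_X' : ∀ (x : V) (hx : x ∈ X j), f j ⟨x, hx⟩ ∈ D → x ∈ X' := by
        intro x hx hD
        rcases hD with hfKm | hbU
        · obtain ⟨y, hy⟩ := hfKm
          have h1 : f j ⟨(y : V), hsun.1 j y.2⟩ = f j ⟨x, hx⟩ := by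
            rw [← hfK j (y : V) y.2]
            exact hy
          have h2 : ((y : V)) = x := congrArg Subtype.val (hinjj h1)
          exact hKX' (h2 ▸ y.2)
        · exact Or.inr ⟨hx, hbU⟩
      have hcopyfix_fK : ∀ (jj : Fin p) (g : W i₀ → V), (∀ x : ↥(X jj), g (f jj x) = (x : V)) →
          ∀ (y : ↥K), g (fK y) = (y : V) := by
        intro jj g hg y
        have h1 : fK y = f jj ⟨(y : V), hsun.1 jj y.2⟩ := hfK jj (y : V) y.2
        rw [h1]
        exact hg _
      -- the inductive construction
      suffices hS : ∀ T, T ≤ γ ^ m * δ → ∃ ψ : Fin T → W i₀ → V,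
          (∀ t, IsCopy (F i₀) G (ψ t)) ∧
          (∀ t (x : ↥X'), ψ t (f j ⟨(x : V), hsub x.2⟩) = (x : V)) ∧
          (Pairwise fun t t' => Disjoint (Set.range (ψ t) \ X') (Set.range (ψ t') \ X')) by
        obtain ⟨ψ, h1, h2, h3⟩ := hS (γ ^ m * δ) le_rfl
        refine ⟨ψ, h1, h2, ?_⟩
        exact And.intro (fun t v hv => ⟨f j ⟨v, hsub hv⟩, h2 t ⟨v, hv⟩⟩) h3
      intro T
      induction T with
      | zero =>
        intro _
        exact ⟨Fin.elim0, fun t => t.elim0, fun t => t.elim0, fun t t' _ => t.elim0⟩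
      | succ T ih =>
        intro hT1
        obtain ⟨ψ₀, hc₀, hf₀, hp₀⟩ := ih (by omega)
        set U : Set V := ⋃ t, (Set.range (ψ₀ t) \ X') with hUdef
        have hblock : ∀ t, (Set.range (ψ₀ t) \ X').ncard = d := by
          intro t
          have hx'r : X' ⊆ Set.range (ψ₀ t) := fun v hv => ⟨f j ⟨v, hsub hv⟩, hf₀ t ⟨v, hv⟩⟩
          rw [Set.ncard_diff hx'r, hrange_ncard _ (hc₀ t).1, ← hm]
        have hUncard : U.ncard ≤ T * d := by
          rw [hUdef]
          exact ncard_iUnion_le_aux _ (fun t => le_of_eq (hblock t))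
        have hUX' : Disjoint U X' := by
          rw [Set.disjoint_left]
          intro v hv hvX'
          rw [hUdef] at hv
          simp only [Set.mem_iUnion] at hv
          obtain ⟨t, ht⟩ := hv
          exact ht.2 hvX'
        -- pick the auxiliary core j'
        obtain ⟨j', hj'⟩ : ∃ j', Disjoint (X j' \ K) (U ∪ X') := by
          apply pick_lemma X K (U ∪ X') (Set.toFinite _) hsun.2
          have h1 : ((U ∪ X') \ K).ncard ≤ (U ∪ X').ncard := Set.ncard_le_ncard Set.diff_subset
          have h2 : (U ∪ X').ncard ≤ U.ncard + X'.ncard := Set.ncard_union_le _ _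
          have h3 := arith_one (γ := γ) hδ hmltn hnw hwγ hd hT1
          have h4 : X'.ncard = m := hm.symm
          have h5 : γ ^ γ * δ ≤ p := hp
          linarith
        -- pick the copy of core j
        obtain ⟨a, ha⟩ : ∃ a, Disjoint (Set.range (φJ a) \ X j) (U ∪ (X j' \ K)) := by
          apply pick_lemma (fun a => Set.range (φJ a)) (X j) _ (Set.toFinite _) hJsun.2
          have h1 : ((U ∪ (X j' \ K)) \ X j).ncard ≤ (U ∪ (X j' \ K)).ncard :=
            Set.ncard_le_ncard Set.diff_subset
          have h2 : (U ∪ (X j' \ K)).ncard ≤ U.ncard + (X j' \ K).ncard := Set.ncard_union_le _ _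
          have h3 : (X j' \ K).ncard ≤ (X j').ncard := Set.ncard_le_ncard Set.diff_subset
          have h4 : (X j').ncard = n := by rw [hsize j' j, ← hn]
          have h5 := arith_two (γ := γ) hδ hγ2 hmltn hnw hwγ hd hT1
          linarith
        -- pick the copy of core j'
        obtain ⟨_, φ', hc', hf', hsun'⟩ := hHC j'
        have hXjr : X j ⊆ Set.range (φJ a) := fun v hv => ⟨f j ⟨v, hv⟩, hJfix a ⟨v, hv⟩⟩
        have hrJe : (Set.range (φJ a) \ X j).ncard = e := by
          rw [Set.ncard_diff hXjr, hrange_ncard _ (hJcopy a).1, ← hn]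
        obtain ⟨b, hb⟩ : ∃ b, Disjoint (Set.range (φ' b) \ X j')
            (U ∪ X' ∪ (Set.range (φJ a) \ X j)) := by
          apply pick_lemma (fun b => Set.range (φ' b)) (X j') _ (Set.toFinite _) hsun'.2
          have h1 : ((U ∪ X' ∪ (Set.range (φJ a) \ X j)) \ X j').ncard
              ≤ (U ∪ X' ∪ (Set.range (φJ a) \ X j)).ncard := Set.ncard_le_ncard Set.diff_subset
          have h2 : (U ∪ X' ∪ (Set.range (φJ a) \ X j)).ncard
              ≤ (U ∪ X').ncard + (Set.range (φJ a) \ X j).ncard := Set.ncard_union_le _ _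
          have h2' : (U ∪ X').ncard ≤ U.ncard + X'.ncard := Set.ncard_union_le _ _
          have h3 := arith_three (γ := γ) hδ hmltn hnw hwγ hd he hT1
          have h4 : X'.ncard = m := hm.symm
          have h5 : γ ^ (X j').ncard * δ = γ ^ n * δ := by rw [hsize j' j, ← hn]
          rw [h5]
          linarith
        -- the new copy
        set ψn : W i₀ → V := fun u => if u ∈ D then φJ a u else φ' b u with hψndef
        have hvalD : ∀ u ∈ D, ψn u = φJ a u := by
          intro u hu
          rw [hψndef]
          exact if_pos hu
        have hvalnD : ∀ u, u ∉ D → ψn u = φ' b u := by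
          intro u hu
          rw [hψndef]
          exact if_neg hu
        have himg1 : ∀ u ∈ D, φJ a u ∈ X' ∪ (Set.range (φJ a) \ X j) := by
          intro u hu
          by_cases hv : φJ a u ∈ X j
          · left
            have hwf : u = f j ⟨φJ a u, hv⟩ := (hJcopy a).1 (hJfix a ⟨φJ a u, hv⟩).symm
            exact hD_X' _ hv (hwf ▸ hu)
          · exact Or.inr ⟨Set.mem_range_self u, hv⟩
        have himg2 : ∀ u, u ∉ D → φ' b u ∈ (X j' \ K) ∪ (Set.range (φ' b) \ X j') := by
          intro u hu
          by_cases hv : φ' b u ∈ X j'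
          · left
            refine ⟨hv, fun hvK => hu ?_⟩
            have hwf : u = f j' ⟨φ' b u, hv⟩ := (hc' b).1 (hf' b ⟨φ' b u, hv⟩).symm
            have h2 : u = fK ⟨φ' b u, hvK⟩ := by
              rw [hfK j' (φ' b u) hvK]
              exact hwf
            exact Or.inl ⟨⟨φ' b u, hvK⟩, h2.symm⟩
          · exact Or.inr ⟨Set.mem_range_self u, hv⟩
        have hagree : ∀ u ∈ Set.range fK, φJ a u = φ' b u := by
          rintro u ⟨y, rfl⟩
          rw [hcopyfix_fK j (φJ a) (hJfix a) y, hcopyfix_fK j' (φ' b) (hf' b) y]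
        have hcross : ∀ v, v ∈ X' ∪ (Set.range (φJ a) \ X j) →
            v ∈ (X j' \ K) ∪ (Set.range (φ' b) \ X j') → False := by
          rintro v (h1 | h1) (h2 | h2)
          · exact Set.disjoint_left.1 hj' h2 (Or.inr h1)
          · exact Set.disjoint_left.1 hb h2 (Or.inl (Or.inr h1))
          · exact Set.disjoint_left.1 ha h1 (Or.inr h2)
          · exact Set.disjoint_left.1 hb h2 (Or.inr h1)
        have hψinj : Function.Injective ψn := by
          intro u1 u2 heq
          by_cases h1 : u1 ∈ D <;> by_cases h2 : u2 ∈ D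
          · rw [hvalD u1 h1, hvalD u2 h2] at heq
            exact (hJcopy a).1 heq
          · rw [hvalD u1 h1, hvalnD u2 h2] at heq
            exact absurd (himg2 u2 h2) (fun hh => hcross _ (himg1 u1 h1) (heq ▸ hh))
          · rw [hvalnD u1 h1, hvalD u2 h2] at heq
            exact absurd (himg2 u1 h1) (fun hh => hcross _ (himg1 u2 h2) (heq ▸ hh))
          · rw [hvalnD u1 h1, hvalnD u2 h2] at heq
            exact (hc' b).1 heq
        have hψadj : ∀ u1 u2, (F i₀).Adj u1 u2 → G.Adj (ψn u1) (ψn u2) := by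
          intro u1 u2 hA
          by_cases h1 : u1 ∈ D <;> by_cases h2 : u2 ∈ D
          · rw [hvalD u1 h1, hvalD u2 h2]
            exact (hJcopy a).2 _ _ hA
          · have hu1fK : u1 ∈ Set.range fK := by
              rcases h1 with h | h
              · exact h
              · exact absurd (Or.inr (hedge u1 u2 hA h (fun hr => h2 (Or.inl hr)))) h2
            rw [hvalD u1 h1, hvalnD u2 h2, hagree u1 hu1fK]
            exact (hc' b).2 _ _ hA
          · have hu2fK : u2 ∈ Set.range fK := by
              rcases h2 with h | h
              · exact h
              · exact absurd (Or.inr (hedge u2 u1 hA.symm h (fun hr => h1 (Or.inl hr)))) h1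
            rw [hvalnD u1 h1, hvalD u2 h2, hagree u2 hu2fK]
            exact (hc' b).2 _ _ hA
          · rw [hvalnD u1 h1, hvalnD u2 h2]
            exact (hc' b).2 _ _ hA
        have hψfix : ∀ x : ↥X', ψn (f j ⟨(x : V), hsub x.2⟩) = (x : V) := by
          intro x
          rw [hvalD _ (hX'D (x : V) x.2)]
          exact hJfix a ⟨(x : V), hsub x.2⟩
        have hψrange : Set.range ψn \ X' ⊆
            (Set.range (φJ a) \ X j) ∪ ((X j' \ K) ∪ (Set.range (φ' b) \ X j')) := by
          rintro v ⟨⟨u, rfl⟩, hvX'⟩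
          by_cases hu : u ∈ D
          · rw [hvalD u hu] at hvX' ⊢
            rcases himg1 u hu with h | h
            · exact absurd h hvX'
            · exact Or.inl h
          · rw [hvalnD u hu] at hvX' ⊢
            exact Or.inr (himg2 u hu)
        have hψU : Disjoint (Set.range ψn \ X') U := by
          rw [Set.disjoint_left]
          intro v hv hvU
          rcases hψrange hv with h | h | h
          · exact Set.disjoint_left.1 ha h (Or.inl hvU)
          · exact Set.disjoint_left.1 hj' h (Or.inl hvU)
          · exact Set.disjoint_left.1 hb h (Or.inl (Or.inl hvU))
        refine ⟨Fin.snoc ψ₀ ψn, ?_, ?_, ?_⟩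
        · intro t
          rcases Fin.eq_castSucc_or_eq_last t with ⟨s, rfl⟩ | rfl
          · rw [Fin.snoc_castSucc]
            exact hc₀ s
          · rw [Fin.snoc_last]
            exact ⟨hψinj, hψadj⟩
        · intro t x
          rcases Fin.eq_castSucc_or_eq_last t with ⟨s, rfl⟩ | rfl
          · rw [Fin.snoc_castSucc]
            exact hf₀ s x
          · rw [Fin.snoc_last]
            exact hψfix x
        · have hkey : ∀ s : Fin T, Disjoint (Set.range ψn \ X') (Set.range (ψ₀ s) \ X') := by
            intro s
            refine Disjoint.mono_right ?_ hψU
            rw [hUdef]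
            exact Set.subset_iUnion (fun t => Set.range (ψ₀ t) \ X') s
          intro t t' hne
          rcases Fin.eq_castSucc_or_eq_last t with ⟨s, rfl⟩ | rfl <;>
            rcases Fin.eq_castSucc_or_eq_last t' with ⟨s', rfl⟩ | rfl
          · rw [Fin.snoc_castSucc, Fin.snoc_castSucc]
            exact hp₀ (fun hss => hne (by rw [hss]))
          · rw [Fin.snoc_castSucc, Fin.snoc_last]
            exact (hkey s).symm
          · rw [Fin.snoc_last, Fin.snoc_castSucc]
            exact hkey s'
          · exact absurd rfl hne
    · -- γ = 1
      have hγeq : γ = 1 := by omega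
      have hm0 : X'.ncard = 0 := by omega
      have hX'e : X' = ∅ := (Set.ncard_eq_zero (Set.toFinite X')).mp hm0
      have hKe : K = ∅ := Set.subset_empty_iff.mp (by rw [← hX'e]; exact hKX')
      have hΔp : γ ^ m * δ ≤ p := by
        refine le_trans ?_ hp
        exact Nat.mul_le_mul_right δ (Nat.pow_le_pow_right hγ1 (by omega))
      choose ψfam hcopy hfix _hsf using fun t : Fin (γ ^ m * δ) => (hHC (Fin.castLE hΔp t)).2
      have hpos : ∀ t : Fin (γ ^ m * δ), 0 < γ ^ (X (Fin.castLE hΔp t)).ncard * δ :=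
        fun t => Nat.mul_pos (Nat.pow_pos hγ1) hδ
      refine ⟨fun t => ψfam t ⟨0, hpos t⟩, fun t => hcopy t _, ?_, ?_, ?_⟩
      · intro t x
        exact absurd (hX'e.subset x.2) (Set.notMem_empty _)
      · intro t
        rw [hX'e]
        exact Set.empty_subset _
      · intro t t' hne
        have hnej : Fin.castLE hΔp t ≠ Fin.castLE hΔp t' := by
          intro h
          have h2 : (Fin.castLE hΔp t).val = (Fin.castLE hΔp t').val := congrArg Fin.val h
          simp only [Fin.coe_castLE] at h2
          exact hne (Fin.ext h2)
        have hr : ∀ s : Fin (γ ^ m * δ),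
            Set.range (ψfam s ⟨0, hpos s⟩) = X (Fin.castLE hΔp s) := by
          intro s
          have hXsub : X (Fin.castLE hΔp s) ⊆ Set.range (ψfam s ⟨0, hpos s⟩) :=
            fun v hv => ⟨f _ ⟨v, hv⟩, hfix s _ ⟨v, hv⟩⟩
          refine (Set.eq_of_subset_of_ncard_le hXsub ?_).symm
          rw [hrange_ncard _ (hcopy s _).1, hsize (Fin.castLE hΔp s) j, ← hn]
          omega
        rw [hX'e]
        simp only [Set.diff_empty]
        rw [hr t, hr t']
        have h2 := hsun.2 hnej
        rw [hKe] at h2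
        simpa using h2
end

section
/- Let 𝓕 be a finite set of graphs with γ = max_{F∈𝓕}|V(F)|, let G be a graph, let δ > 0 be an integer and r = γ^{γ+1}·δ, and let F ∈ 𝓕. Suppose (X_1,F,f_1), …, (X_r,F,f_r) are (𝓕,δ)-heavy cores in G such that the sets X_1,…,X_r form a sunflower with core X and there exists f : X → V(F) satisfying f = (f_i)|_X for all i ∈ [r]. Then (X,F,f) is also an (𝓕,δ)-heavy core in G. -/
private lemma ncard_iUnion_le_fin {V : Type} [Fintype V] :
    ∀ (s : ℕ) (A : Fin s → Set V) (g : ℕ), (∀ a, (A a).ncard ≤ g) →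
      (⋃ a, A a).ncard ≤ s * g := by
  intro s
  induction s with
  | zero =>
    intro A g _
    have h0 : (⋃ a : Fin 0, A a) = ∅ := by
      ext x
      simp only [Set.mem_iUnion, Set.mem_empty_iff_false, iff_false]
      rintro ⟨a, -⟩
      exact a.elim0
    rw [h0]
    simp
  | succ n ih =>
    intro A g hA
    have hsplit : (⋃ a, A a) = A 0 ∪ ⋃ a : Fin n, A a.succ := by
      ext x; simp [Set.mem_iUnion, Fin.exists_fin_succ]
    rw [hsplit]
    calc (A 0 ∪ ⋃ a : Fin n, A a.succ).ncard
        ≤ (A 0).ncard + (⋃ a : Fin n, A a.succ).ncard := Set.ncard_union_le _ _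
      _ ≤ g + n * g := Nat.add_le_add (hA 0) (ih _ g fun a => hA a.succ)
      _ = (n + 1) * g := by ring

/-- if `r = γ^(γ+1)·δ` heavy cores `(X₁,F,f₁),…,(X_r,F,f_r)` form a sunflower
with core `X` and there is `f : X → V(F)` with `f = fᵢ|_X` for all `i`, then `(X,F,f)` is
also an `(𝓕,δ)`-heavy core in `G`. -/
theorem stmt_6 {V ι : Type} [Fintype V] [Fintype ι] {W : ι → Type} [∀ i, Fintype (W i)]
    (F : ∀ i, SimpleGraph (W i)) (G : SimpleGraph V)
    (γ : ℕ) (hγ : γ = Finset.univ.sup fun i => Fintype.card (W i))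
    (δ r : ℕ) (hδ : 0 < δ) (hr : r = γ ^ (γ + 1) * δ)
    (i₀ : ι) (X : Fin r → Set V) (f : ∀ j, ↥(X j) → W i₀)
    (hHC : ∀ j, IsHeavyCore γ δ G (F i₀) (X j) (f j))
    (K : Set V) (hsun : IsSunflower X K)
    (fK : ↥K → W i₀)
    (hfK : ∀ (j : Fin r) (x : V) (hxK : x ∈ K), fK ⟨x, hxK⟩ = f j ⟨x, hsun.1 j hxK⟩) :
    IsHeavyCore γ δ G (F i₀) K fK := by
  classical
  have hKsub : ∀ j, K ⊆ X j := hsun.1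
  have hWcard : Fintype.card (W i₀) ≤ γ := by
    rw [hγ]
    exact Finset.le_sup (f := fun i => Fintype.card (W i)) (Finset.mem_univ i₀)
  by_cases hγ0 : γ = 0
  · -- degenerate case: the pattern graph is empty
    have hWempty : IsEmpty (W i₀) := by
      rw [← Fintype.card_eq_zero_iff]; omega
    have hKempty : IsEmpty ↥K := Function.isEmpty fK
    have hK : K = ∅ := Set.isEmpty_coe_sort.mp hKempty
    haveI := hWempty
    set φ0 : W i₀ → V := fun w => (hWempty.false w).elim with hφ0
    have hrange : Set.range φ0 = ∅ := Set.range_eq_empty _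
    refine ⟨fun a b _ => hKempty.elim a,
      fun _ => φ0,
      fun j => ⟨fun a _ _ => (hWempty.false a).elim, fun a => (hWempty.false a).elim⟩,
      fun j x => hKempty.elim x, ?_, ?_⟩
    · intro j
      show K ⊆ Set.range φ0
      rw [hrange, hK]
    · intro a b _
      show Disjoint (Set.range φ0 \ K) (Set.range φ0 \ K)
      rw [hrange]
      simp
  · have hγ1 : 1 ≤ γ := Nat.one_le_iff_ne_zero.mpr hγ0
    have hr0 : 0 < r := by rw [hr]; positivity
    have hfKinj : Function.Injective fK := by
      intro a b hab
      have h1 : f ⟨0, hr0⟩ ⟨a.1, hKsub _ a.2⟩ = f ⟨0, hr0⟩ ⟨b.1, hKsub _ b.2⟩ := by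
        rw [← hfK ⟨0, hr0⟩ a.1 a.2, ← hfK ⟨0, hr0⟩ b.1 b.2]
        exact hab
      have h2 := (hHC ⟨0, hr0⟩).1 h1
      have h3 := congrArg Subtype.val h2
      exact Subtype.ext h3
    have hKle : K.ncard ≤ γ := by
      have h1 : Nat.card ↥K ≤ Nat.card (W i₀) :=
        Nat.card_le_card_of_injective fK hfKinj
      rw [Nat.card_coe_set_eq, Nat.card_eq_fintype_card] at h1
      exact h1.trans hWcard
    by_cases hA : ∃ j, X j = K
    · -- some core already equals K
      obtain ⟨j, hj⟩ := hA
      obtain ⟨-, φ, hcopy, hfix, hsunX⟩ := hHC j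
      have hcast : γ ^ K.ncard * δ = γ ^ (X j).ncard * δ := by rw [hj]
      refine ⟨hfKinj, fun t => φ (Fin.cast hcast t), fun t => hcopy _, ?_, ?_, ?_⟩
      · intro t x
        have hx' : (x : V) ∈ X j := hj ▸ x.2
        have h2 := hfix (Fin.cast hcast t) ⟨x, hx'⟩
        rw [← h2]
        congr 1
        exact hfK j x.1 x.2
      · intro t
        intro v hv
        exact hsunX.1 (Fin.cast hcast t) (show v ∈ X j from hj ▸ hv)
      · intro a b hab
        have hne : Fin.cast hcast a ≠ Fin.cast hcast b := by
          intro h; exact hab (by simpa [Fin.ext_iff] using h)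
        have h2 : Disjoint (Set.range (φ (Fin.cast hcast a)) \ X j)
            (Set.range (φ (Fin.cast hcast b)) \ X j) := hsunX.2 hne
        refine Set.disjoint_left.mpr ?_
        intro w hw1 hw2
        exact Set.disjoint_left.mp h2 ⟨hw1.1, fun h => hw1.2 (hj ▸ h)⟩
          ⟨hw2.1, fun h => hw2.2 (hj ▸ h)⟩
    · -- all cores strictly contain K
      push_neg at hA
      have hssub : ∀ j, K ⊂ X j := fun j => (hKsub j).ssubset_of_ne (fun h => hA j h.symm)
      have hnlt : ∀ j, K.ncard < (X j).ncard := fun j =>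
        Set.ncard_lt_ncard (hssub j) (Set.toFinite _)
      have hVne : Nonempty V := by
        obtain ⟨x, hx, -⟩ := Set.exists_of_ssubset (hssub ⟨0, hr0⟩)
        exact ⟨x⟩
      have key : ∀ s : ℕ, s ≤ γ ^ K.ncard * δ → ∃ ψ : Fin s → W i₀ → V,
          (∀ a, IsCopy (F i₀) G (ψ a)) ∧ (∀ a (x : ↥K), ψ a (fK x) = (x : V)) ∧
          (∀ a, K ⊆ Set.range (ψ a)) ∧
          Pairwise fun a b => Disjoint (Set.range (ψ a) \ K) (Set.range (ψ b) \ K) := by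
        intro s
        induction s with
        | zero =>
          exact fun _ => ⟨fun a => a.elim0, fun a => a.elim0, fun a => a.elim0,
            fun a => a.elim0, fun a b _ => a.elim0⟩
        | succ n ih =>
          intro hn1
          obtain ⟨ψ, hψcopy, hψfix, hψK, hψdisj⟩ := ih (Nat.le_of_succ_le hn1)
          set U : Set V := ⋃ a : Fin n, (Set.range (ψ a) \ K) with hUdef
          have hUfin : U.Finite := Set.toFinite _
          have hUcard : U.ncard ≤ n * γ := by
            apply ncard_iUnion_le_fin
            intro a
            calc (Set.range (ψ a) \ K).ncard
                ≤ (Set.range (ψ a)).ncard :=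
                  Set.ncard_le_ncard Set.diff_subset (Set.toFinite _)
              _ = ((ψ a) '' Set.univ).ncard := by rw [Set.image_univ]
              _ ≤ (Set.univ : Set (W i₀)).ncard := Set.ncard_image_le (Set.toFinite _)
              _ = Fintype.card (W i₀) := by rw [Set.ncard_univ, Nat.card_eq_fintype_card]
              _ ≤ γ := hWcard
          have hUm : U.ncard < γ ^ (K.ncard + 1) * δ := by
            have h1 : n < γ ^ K.ncard * δ := hn1
            calc U.ncard ≤ n * γ := hUcard
              _ < (γ ^ K.ncard * δ) * γ :=
                  (Nat.mul_lt_mul_right (by omega : 0 < γ)).mpr h1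
              _ = γ ^ (K.ncard + 1) * δ := by ring
          -- find a core j whose private part X j \ K avoids U
          set S : Set (Fin r) := {j : Fin r | ((X j \ K) ∩ U).Nonempty} with hSdef
          have hScard : S.ncard ≤ U.ncard := by
            set u : Fin r → V := fun j =>
              if h : ((X j \ K) ∩ U).Nonempty then h.choose else Classical.arbitrary V
              with hudef
            have hu : ∀ j ∈ S, u j ∈ (X j \ K) ∩ U := by
              intro j hj
              have h : ((X j \ K) ∩ U).Nonempty := hj
              have he : u j = h.choose := dif_pos h
              rw [he]
              exact h.choose_spec
            refine Set.ncard_le_ncard_of_injOn u (fun j hj => (hu j hj).2) ?_ hUfin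
            intro a ha b hb hab
            by_contra hne
            exact Set.disjoint_left.mp (hsun.2 hne) (hu a ha).1 (hab ▸ (hu b hb).1)
          have hSr : S.ncard < (Set.univ : Set (Fin r)).ncard := by
            rw [Set.ncard_univ, Nat.card_eq_fintype_card, Fintype.card_fin]
            calc S.ncard ≤ U.ncard := hScard
              _ < γ ^ (K.ncard + 1) * δ := hUm
              _ ≤ γ ^ (γ + 1) * δ :=
                  Nat.mul_le_mul_right δ (Nat.pow_le_pow_right hγ1 (by omega))
              _ = r := hr.symm
          obtain ⟨j, -, hjS⟩ :=
            Set.exists_mem_notMem_of_ncard_lt_ncard hSr (Set.toFinite _)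
          have hjS' : (X j \ K) ∩ U = ∅ :=
            Set.not_nonempty_iff_eq_empty.mp hjS
          -- find a copy of core j whose petal avoids U
          obtain ⟨-, φ, hφcopy, hφfix, hφsun⟩ := hHC j
          set T : Set (Fin (γ ^ (X j).ncard * δ)) :=
            {t | ((Set.range (φ t) \ X j) ∩ U).Nonempty} with hTdef
          have hTcard : T.ncard ≤ U.ncard := by
            set v : Fin (γ ^ (X j).ncard * δ) → V := fun t =>
              if h : ((Set.range (φ t) \ X j) ∩ U).Nonempty then h.choose
              else Classical.arbitrary V with hvdef
            have hv : ∀ t ∈ T, v t ∈ (Set.range (φ t) \ X j) ∩ U := by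
              intro t ht
              have h : ((Set.range (φ t) \ X j) ∩ U).Nonempty := ht
              have he : v t = h.choose := dif_pos h
              rw [he]
              exact h.choose_spec
            refine Set.ncard_le_ncard_of_injOn v (fun t ht => (hv t ht).2) ?_ hUfin
            intro a ha b hb hab
            by_contra hne
            exact Set.disjoint_left.mp (hφsun.2 hne) (hv a ha).1 (hab ▸ (hv b hb).1)
          have hTlt : T.ncard < (Set.univ : Set (Fin (γ ^ (X j).ncard * δ))).ncard := by
            rw [Set.ncard_univ, Nat.card_eq_fintype_card, Fintype.card_fin]
            calc T.ncard ≤ U.ncard := hTcard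
              _ < γ ^ (K.ncard + 1) * δ := hUm
              _ ≤ γ ^ (X j).ncard * δ :=
                  Nat.mul_le_mul_right δ (Nat.pow_le_pow_right hγ1 (hnlt j))
          obtain ⟨t, -, htT⟩ :=
            Set.exists_mem_notMem_of_ncard_lt_ncard hTlt (Set.toFinite _)
          have htT' : (Set.range (φ t) \ X j) ∩ U = ∅ :=
            Set.not_nonempty_iff_eq_empty.mp htT
          -- new copy is disjoint (outside K) from all previous ones
          have hdisjnew : ∀ a : Fin n,
              Disjoint (Set.range (ψ a) \ K) (Set.range (φ t) \ K) := by
            intro a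
            rw [Set.disjoint_left]
            intro w hw1 hw2
            have hwU : w ∈ U := Set.mem_iUnion.mpr ⟨a, hw1⟩
            by_cases hwX : w ∈ X j
            · have : w ∈ (X j \ K) ∩ U := ⟨⟨hwX, hw2.2⟩, hwU⟩
              rw [hjS'] at this
              exact this
            · have : w ∈ (Set.range (φ t) \ X j) ∩ U := ⟨⟨hw2.1, hwX⟩, hwU⟩
              rw [htT'] at this
              exact this
          refine ⟨Fin.snoc ψ (φ t), ?_, ?_, ?_, ?_⟩
          · intro a
            rcases Fin.eq_castSucc_or_eq_last a with ⟨a', rfl⟩ | rfl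
            · rw [Fin.snoc_castSucc]; exact hψcopy a'
            · rw [Fin.snoc_last]; exact hφcopy t
          · intro a x
            rcases Fin.eq_castSucc_or_eq_last a with ⟨a', rfl⟩ | rfl
            · rw [Fin.snoc_castSucc]; exact hψfix a' x
            · rw [Fin.snoc_last]
              have h1 : fK x = f j ⟨x.1, hKsub j x.2⟩ := hfK j x.1 x.2
              rw [h1]
              exact hφfix t ⟨x.1, hKsub j x.2⟩
          · intro a
            rcases Fin.eq_castSucc_or_eq_last a with ⟨a', rfl⟩ | rfl
            · rw [Fin.snoc_castSucc]; exact hψK a'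
            · rw [Fin.snoc_last]
              intro w hw
              exact ⟨f j ⟨w, hKsub j hw⟩, hφfix t ⟨w, hKsub j hw⟩⟩
          · intro a b hab
            rcases Fin.eq_castSucc_or_eq_last a with ⟨a', rfl⟩ | rfl <;>
              rcases Fin.eq_castSucc_or_eq_last b with ⟨b', rfl⟩ | rfl
            · rw [Fin.snoc_castSucc, Fin.snoc_castSucc]
              exact hψdisj fun h => hab (congrArg Fin.castSucc h)
            · rw [Fin.snoc_castSucc, Fin.snoc_last]
              exact hdisjnew a'
            · rw [Fin.snoc_last, Fin.snoc_castSucc]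
              exact (hdisjnew b').symm
            · exact absurd rfl hab
      obtain ⟨ψ, h1, h2, h3, h4⟩ := key (γ ^ K.ncard * δ) le_rfl
      exact ⟨hfKinj, ψ, h1, h2, h3, h4⟩
end

section
/- Let G be a graph, 𝓕 a finite set of graphs, δ > 0 an integer, and U ⊆ V(G) such that the induced subgraph G[U] contains no subgraph isomorphic to any graph in 𝓕. For any set S ⊆ V(G) ∖ U, if S ∩ X ≠ ∅ for every U-active (𝓕,δ)-heavy core (X,F,f) in G, then S is an 𝓕-hitting set of G. -/
/-- if `G[U]` is `𝓕`-free and `S ⊆ V(G) ∖ U` meets every `U`-active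
`(𝓕,δ)`-heavy core in `G`, then `S` is an `𝓕`-hitting set of `G`. -/
theorem stmt_10 {V ι : Type} [Fintype V] [Fintype ι] {W : ι → Type} [∀ i, Fintype (W i)]
    (F : ∀ i, SimpleGraph (W i)) (G : SimpleGraph V)
    (γ : ℕ) (hγ : γ = Finset.univ.sup fun i => Fintype.card (W i))
    (δ : ℕ) (hδ : 0 < δ) (U : Set V)
    (hUfree : ∀ (i : ι) (φ : W i → V), IsCopy (F i) G φ → ¬ Set.range φ ⊆ U)
    (S : Set V) (hSU : S ⊆ Uᶜ)
    (hhit : ∀ (i : ι) (X : Set V) (f : ↥X → W i),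
      IsHeavyCore γ δ G (F i) X f → UMinimalHC γ δ G (F i) U X f →
      ¬ HCURedundant G (F i) U X f → (S ∩ X).Nonempty) :
    IsHittingSet G F S := by
  intro i0 φ0 hφ0
  by_contra hS0
  push_neg at hS0
  -- minimize |range φ \ U| over all S-avoiding copies
  have hNne : {n | ∃ (i : ι) (φ : W i → V), IsCopy (F i) G φ ∧ (∀ a, φ a ∉ S) ∧
      n = (Set.range φ \ U).ncard}.Nonempty := ⟨_, i0, φ0, hφ0, hS0, rfl⟩
  obtain ⟨i, φ, hφ, hφS, hn⟩ := Nat.sInf_mem hNne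
  have hmin : ∀ (i' : ι) (ψ : W i' → V), IsCopy (F i') G ψ → (∀ a, ψ a ∉ S) →
      (Set.range φ \ U).ncard ≤ (Set.range ψ \ U).ncard := by
    intro i' ψ hψ hψS
    rw [← hn]
    exact Nat.sInf_le ⟨i', ψ, hψ, hψS, rfl⟩
  -- the inverse of φ on its range
  have hfdef : ∀ x : ↥(Set.range φ), ∃ a, φ a = (x : V) := fun x => x.property
  set f : ↥(Set.range φ) → W i := fun x => (hfdef x).choose with hf
  have hφf : ∀ x : ↥(Set.range φ), φ (f x) = (x : V) := fun x => (hfdef x).choose_spec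
  have hfinj : Function.Injective f := by
    intro x y hxy
    apply Subtype.ext
    rw [← hφf x, ← hφf y, hxy]
  have hbase : IsHeavyCore γ δ G (F i) (Set.range φ) f := by
    refine ⟨hfinj, fun _ => φ, fun _ => hφ, fun _ x => hφf x, fun j => subset_rfl, ?_⟩
    intro a b hab
    simp [Set.diff_self]
  have hrange_nsub : ¬ Set.range φ ⊆ U := hUfree i φ hφ
  -- minimize over heavy cores below (range φ, f) not contained in U
  have hMne : {m | ∃ (Y : Set V) (g : ↥Y → W i),
      (IsHeavyCore γ δ G (F i) Y g ∧ ¬ Y ⊆ U ∧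
        ∃ h : Y ⊆ Set.range φ, ∀ (x : V) (hx : x ∈ Y), g ⟨x, hx⟩ = f ⟨x, h hx⟩) ∧
      m = Y.ncard}.Nonempty :=
    ⟨_, Set.range φ, f, ⟨hbase, hrange_nsub, subset_rfl, fun x hx => rfl⟩, rfl⟩
  obtain ⟨Y, g, ⟨hYhc, hYU, hYsub, hYcompat⟩, hm⟩ := Nat.sInf_mem hMne
  have hmin2 : ∀ (Z : Set V) (h' : ↥Z → W i),
      IsHeavyCore γ δ G (F i) Z h' → ¬ Z ⊆ U →
      (∃ h : Z ⊆ Set.range φ, ∀ (x : V) (hx : x ∈ Z), h' ⟨x, hx⟩ = f ⟨x, h hx⟩) →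
      Y.ncard ≤ Z.ncard := by
    intro Z h' h1 h2 h3
    rw [← hm]
    exact Nat.sInf_le ⟨Z, h', ⟨h1, h2, h3⟩, rfl⟩
  -- (Y, g) is U-minimal
  have hUmin : UMinimalHC γ δ G (F i) U Y g := by
    refine ⟨hYU, fun Z h' hZhc hprec => ?_⟩
    obtain ⟨hZY, hne, hcompat⟩ := hprec
    by_contra hZU
    have hle : Y.ncard ≤ Z.ncard := by
      refine hmin2 Z h' hZhc hZU ⟨hZY.trans hYsub, fun x hx => ?_⟩
      rw [hcompat x hx, hYcompat x (hZY hx)]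
    have hlt : Z.ncard < Y.ncard :=
      Set.ncard_lt_ncard (HasSubset.Subset.ssubset_of_ne hZY hne)
    exact absurd hle (Nat.not_le.mpr hlt)
  -- (Y, g) is not U-redundant
  have hnotred : ¬ HCURedundant G (F i) U Y g := by
    intro hred
    obtain ⟨ψ, hψ, hψU, hψss⟩ := hred φ hφ (fun y => by
      rw [hYcompat (y : V) y.property]
      exact hφf _)
    have hψS : ∀ a, ψ a ∉ S := by
      intro a ha
      have h1 : ψ a ∉ U := fun hu => hSU ha hu
      have h2 : ψ a ∈ Set.range φ \ U := hψss.subset ⟨Set.mem_range_self a, h1⟩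
      obtain ⟨b, hb⟩ := h2.1
      exact hφS b (hb ▸ ha)
    have hle := hmin i ψ hψ hψS
    have hlt : (Set.range ψ \ U).ncard < (Set.range φ \ U).ncard :=
      Set.ncard_lt_ncard hψss
    exact absurd hle (Nat.not_le.mpr hlt)
  obtain ⟨s, hsS, hsY⟩ := hhit i Y g hYhc hUmin hnotred
  obtain ⟨a, ha⟩ := hYsub hsY
  exact hφS a (ha ▸ hsS)
end

section
/- Let 𝓕 be a finite set of connected graphs with γ = max_{F∈𝓕}|V(F)|, let G be a graph, let σ be a linear ordering of V(G) with wcol_{2γ}(G,σ) = wcol_{2γ}(G), let δ > 0 be an integer, and let S be an 𝓕-hitting set of G. For v ∈ V(G) put λ_S(v) = |{u ∈ S : v ∈ WR_γ(G,σ,u)}|. Let (X,F,f) be an (𝓕,δ)-heavy core in G and let x be the largest vertex of X with respect to σ. If S ∩ X = ∅, then λ_S(x) ≥ δ − γ − wcol_{2γ}(G). Furthermore, if δ > wcol_{2γ}(G), then x ∈ WR_γ(G,σ,u) for all u ∈ X. -/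
/-- for an `(𝓕,δ)`-heavy core `(X,F,f)` (all members of `𝓕` connected) and
`x` the largest vertex of `X` w.r.t. `σ`: if `S ∩ X = ∅` then
`λ_S(x) ≥ δ − γ − wcol_{2γ}(G)`; moreover if `δ > wcol_{2γ}(G)` then `x ∈ WR_γ(G,σ,u)`
for every `u ∈ X`. -/
theorem stmt_11 {V ι : Type} [Fintype V] [Fintype ι] {W : ι → Type} [∀ i, Fintype (W i)]
    (F : ∀ i, SimpleGraph (W i)) (hconn : ∀ i, (F i).Connected)
    (G : SimpleGraph V)
    (γ : ℕ) (hγ : γ = Finset.univ.sup fun i => Fintype.card (W i))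
    (σ : V ↪ ℕ) (hσ : wcolOn G σ (2 * γ) = wcol G (2 * γ))
    (δ : ℕ) (hδ : 0 < δ)
    (S : Set V) (hS : IsHittingSet G F S)
    (i₀ : ι) (X : Set V) (f : ↥X → W i₀)
    (hHC : IsHeavyCore γ δ G (F i₀) X f)
    (x : V) (hxX : x ∈ X) (hxmax : ∀ z ∈ X, σ z ≤ σ x) :
    (S ∩ X = ∅ →
      (δ : ℤ) - γ - wcol G (2 * γ) ≤ ({u ∈ S | x ∈ WR G σ γ u}.ncard : ℤ)) ∧
    (wcol G (2 * γ) < δ → ∀ u ∈ X, x ∈ WR G σ γ u) := by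
  classical
  obtain ⟨finj, φ, hcopy, hfix, hXsub, hdisj⟩ := hHC
  have hcard : Fintype.card (W i₀) ≤ γ := by
    rw [hγ]; exact Finset.le_sup (f := fun i => Fintype.card (W i)) (Finset.mem_univ i₀)
  have hW : Nonempty (W i₀) := ⟨f ⟨x, hxX⟩⟩
  have hγ1 : 1 ≤ γ := le_trans Fintype.card_pos hcard
  have hpow : 0 < γ ^ X.ncard := Nat.one_le_pow X.ncard γ (by omega)
  have hδΔ : δ ≤ γ ^ X.ncard * δ := Nat.le_mul_of_pos_left δ hpow
  -- a short path between any two vertices of a copy, staying inside the copy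
  have hpath : ∀ (j : Fin (γ ^ X.ncard * δ)) (a b : W i₀), ∃ p : G.Walk (φ j a) (φ j b),
      p.IsPath ∧ p.length ≤ γ ∧ ∀ w ∈ p.support, w ∈ Set.range (φ j) := by
    intro j a b
    obtain ⟨q⟩ := (hconn i₀).preconnected a b
    have hq : (q.toPath : (F i₀).Walk a b).IsPath := q.toPath.2
    refine ⟨(q.toPath : (F i₀).Walk a b).map ⟨φ j, fun h => (hcopy j).2 _ _ h⟩, ?_, ?_, ?_⟩
    · exact SimpleGraph.Walk.map_isPath_of_injective (hcopy j).1 hq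
    · rw [SimpleGraph.Walk.length_map]
      exact le_trans (Nat.le_of_lt hq.length_lt) hcard
    · intro w hw
      rw [SimpleGraph.Walk.support_map, List.mem_map] at hw
      obtain ⟨a', _, rfl⟩ := hw
      exact ⟨a', rfl⟩
  have hWR : ∀ v : V, (WR G σ (2 * γ) v).ncard ≤ wcol G (2 * γ) := by
    intro v
    rw [← hσ]
    unfold wcolOn
    exact Finset.le_sup (f := fun v => (WR G σ (2 * γ) v).ncard) (Finset.mem_univ v)
  -- core counting lemma: few indices have a path going above x
  have core : ∀ (s : Fin (γ ^ X.ncard * δ) → V) (p : ∀ j, G.Walk (s j) x),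
      (∀ j, (p j).IsPath) → (∀ j, (p j).length ≤ γ) →
      (∀ j, ∀ w ∈ (p j).support, w ∈ Set.range (φ j)) →
      ({j : Fin (γ ^ X.ncard * δ) | ¬ ∀ w ∈ (p j).support, σ w ≤ σ x}).ncard ≤ wcol G (2 * γ) := by
    intro s p hp hl hsupp
    have hmaxex : ∀ j : Fin (γ ^ X.ncard * δ), ∃ m, m ∈ (p j).support ∧ ∀ w ∈ (p j).support, σ w ≤ σ m := by
      intro j
      obtain ⟨m, hm, hmx⟩ := Finset.exists_max_image (p j).support.toFinset σ
        ⟨s j, List.mem_toFinset.mpr ((p j).start_mem_support)⟩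
      exact ⟨m, List.mem_toFinset.mp hm, fun w hw => hmx w (List.mem_toFinset.mpr hw)⟩
    choose m hm hmx using hmaxex
    have hbig : ∀ j ∈ {j : Fin (γ ^ X.ncard * δ) | ¬ ∀ w ∈ (p j).support, σ w ≤ σ x}, σ x < σ (m j) := by
      intro j hj
      have hj' : ¬ ∀ w ∈ (p j).support, σ w ≤ σ x := hj
      push_neg at hj'
      obtain ⟨w, hw, hwx⟩ := hj'
      exact lt_of_lt_of_le hwx (hmx j w hw)
    refine le_trans (Set.ncard_le_ncard_of_injOn m ?_ ?_ (Set.toFinite _)) (hWR x)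
    · intro j hj
      have hmr : m j ∈ (p j).reverse.support := by
        rw [SimpleGraph.Walk.support_reverse, List.mem_reverse]; exact hm j
      refine ⟨(p j).reverse.takeUntil (m j) hmr, (hp j).reverse.takeUntil hmr, ?_, ?_⟩
      · have h1 := SimpleGraph.Walk.length_takeUntil_le (p j).reverse hmr
        rw [SimpleGraph.Walk.length_reverse] at h1
        have := hl j
        omega
      · intro w hw
        have hw' := SimpleGraph.Walk.support_takeUntil_subset _ hmr hw
        rw [SimpleGraph.Walk.support_reverse, List.mem_reverse] at hw'
        exact hmx j w hw'
    · intro j hj j' hj' heq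
      by_contra hne
      have h1 : m j ∈ Set.range (φ j) \ X :=
        ⟨hsupp j _ (hm j), fun hmem => absurd (hxmax _ hmem) (not_le.mpr (hbig j hj))⟩
      have h2 : m j ∈ Set.range (φ j') \ X := heq ▸
        ⟨hsupp j' _ (hm j'), fun hmem => absurd (hxmax _ hmem) (not_le.mpr (hbig j' hj'))⟩
      exact Set.disjoint_left.mp (hdisj hne) h1 h2
  constructor
  · -- Part 1
    intro hSX
    have hsex : ∀ j : Fin (γ ^ X.ncard * δ), ∃ v, v ∈ S ∧ v ∈ Set.range (φ j) := by
      intro j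
      obtain ⟨a, ha⟩ := hS i₀ (φ j) (hcopy j)
      exact ⟨φ j a, ha, a, rfl⟩
    choose s hsS hsR using hsex
    have hsX : ∀ j, s j ∉ X := by
      intro j hmem
      have h : s j ∈ S ∩ X := ⟨hsS j, hmem⟩
      rw [hSX] at h
      exact h
    have hpex : ∀ j : Fin (γ ^ X.ncard * δ), ∃ p : G.Walk (s j) x,
        p.IsPath ∧ p.length ≤ γ ∧ ∀ w ∈ p.support, w ∈ Set.range (φ j) := by
      intro j
      obtain ⟨a, ha⟩ := hsR j
      obtain ⟨b, hb⟩ := hXsub j hxX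
      obtain ⟨p, h1, h2, h3⟩ := hpath j a b
      exact ⟨p.copy ha hb, by simpa using h1, by simpa using h2, by simpa using h3⟩
    choose p hpp hpl hps using hpex
    have hbad := core s p hpp hpl hps
    have hinj : Function.Injective s := by
      intro j j' heq
      by_contra hne
      exact Set.disjoint_left.mp (hdisj hne) ⟨hsR j, hsX j⟩ (heq ▸ ⟨hsR j', hsX j'⟩)
    have hgood : ({j : Fin (γ ^ X.ncard * δ) | ¬ ∀ w ∈ (p j).support, σ w ≤ σ x})ᶜ.ncard ≤
        ({u ∈ S | x ∈ WR G σ γ u}).ncard := by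
      refine Set.ncard_le_ncard_of_injOn s ?_ (hinj.injOn) (Set.toFinite _)
      intro j hj
      rw [Set.mem_compl_iff, Set.mem_setOf_eq, not_not] at hj
      exact ⟨hsS j, p j, hpp j, hpl j, hj⟩
    have hsum := Set.ncard_add_ncard_compl
      ({j : Fin (γ ^ X.ncard * δ) | ¬ ∀ w ∈ (p j).support, σ w ≤ σ x})
    rw [Nat.card_eq_fintype_card, Fintype.card_fin] at hsum
    omega
  · -- Part 2
    intro hkδ u huX
    have hpex : ∀ j : Fin (γ ^ X.ncard * δ), ∃ p : G.Walk u x,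
        p.IsPath ∧ p.length ≤ γ ∧ ∀ w ∈ p.support, w ∈ Set.range (φ j) := by
      intro j
      obtain ⟨a, ha⟩ := hXsub j huX
      obtain ⟨b, hb⟩ := hXsub j hxX
      obtain ⟨p, h1, h2, h3⟩ := hpath j a b
      exact ⟨p.copy ha hb, by simpa using h1, by simpa using h2, by simpa using h3⟩
    choose p hpp hpl hps using hpex
    have hbad := core (fun _ => u) p hpp hpl hps
    have hne : ({j : Fin (γ ^ X.ncard * δ) | ¬ ∀ w ∈ (p j).support, σ w ≤ σ x}) ≠ Set.univ := by
      intro h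
      rw [h, Set.ncard_univ, Nat.card_eq_fintype_card, Fintype.card_fin] at hbad
      omega
    obtain ⟨j, hj⟩ := (Set.ne_univ_iff_exists_notMem _).mp hne
    rw [Set.mem_setOf_eq, not_not] at hj
    exact ⟨p j, hpp j, hpl j, hj⟩
end

section
/- Let 𝓕 be a finite set of connected graphs with γ = max_{F∈𝓕}|V(F)|, let G be a graph, let σ be a linear ordering of V(G) with wcol_{2γ}(G,σ) = wcol_{2γ}(G), let δ > 0 be an integer, and let S be an 𝓕-hitting set of G. For v ∈ V(G) put λ_S(v) = |{u ∈ S : v ∈ WR_γ(G,σ,u)}| and let R = {v ∈ V(G) : λ_S(v) ≥ δ − γ − wcol_{2γ}(G)}. Let (X,F,f) be an (𝓕,δ)-heavy core in G, let z ∈ X, and let (H_1,π_1), …, (H_Δ,π_Δ) be a witness of (X,F,f), where Δ = γ^{|X|}·δ. Let C_z be the connected component of F − f({x ∈ X : x >_σ z}) containing f(z), and let C' be a connected component of F − f(X) with V(C') ⊆ V(C_z). If z ∉ R, then there exists J ⊆ [Δ] with |J| = γ such that S ∩ π_j^{-1}(V(C')) = ∅ for all j ∈ J. -/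
/-- with the notation of the paper (witness `(H_j,π_j)`, `j ∈ [Δ]`, of the
heavy core `(X,F,f)`, `z ∈ X`, `C_z` the component of `F − f({x ∈ X : x >_σ z})` containing
`f(z)`, and `C'` a component of `F − f(X)` contained in `C_z`), if `z ∉ R` then there are
`γ` indices `j` with `S ∩ π_j⁻¹(V(C')) = ∅`. -/
theorem stmt_12 {V ι : Type} [Fintype V] [Fintype ι] {W : ι → Type} [∀ i, Fintype (W i)]
    (F : ∀ i, SimpleGraph (W i)) (hconn : ∀ i, (F i).Connected)
    (G : SimpleGraph V)
    (γ : ℕ) (hγ : γ = Finset.univ.sup fun i => Fintype.card (W i))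
    (σ : V ↪ ℕ) (hσ : wcolOn G σ (2 * γ) = wcol G (2 * γ))
    (δ : ℕ) (hδ : 0 < δ)
    (S : Set V) (hS : IsHittingSet G F S)
    (i₀ : ι) (X : Set V) (f : ↥X → W i₀) (hfinj : Function.Injective f)
    (φ : Fin (γ ^ X.ncard * δ) → W i₀ → V)
    (hcopy : ∀ j, IsCopy (F i₀) G (φ j))
    (hrestr : ∀ j (x : ↥X), φ j (f x) = (x : V))
    (hsun : IsSunflower (fun j => Set.range (φ j)) X)
    (z : V) (hz : z ∈ X)
    (D : Set (W i₀)) (hD : D = f '' {x : ↥X | σ z < σ (x : V)})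
    (Cz : ((F i₀).induce Dᶜ).ConnectedComponent)
    (hCz : ∃ hmem : f ⟨z, hz⟩ ∈ Dᶜ,
      ((F i₀).induce Dᶜ).connectedComponentMk ⟨f ⟨z, hz⟩, hmem⟩ = Cz)
    (C' : ((F i₀).induce (Set.range f)ᶜ).ConnectedComponent)
    (hC'sub : Subtype.val '' C'.supp ⊆ Subtype.val '' Cz.supp)
    (hzR : ({u ∈ S | z ∈ WR G σ γ u}.ncard : ℤ) < (δ : ℤ) - γ - wcol G (2 * γ)) :
    ∃ J : Finset (Fin (γ ^ X.ncard * δ)), J.card = γ ∧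
      ∀ j ∈ J, S ∩ (φ j '' (Subtype.val '' C'.supp)) = ∅ := by
  
  classical
  rcases Nat.eq_zero_or_pos γ with hγ0 | hγpos
  · exact ⟨∅, by simp [hγ0], by simp⟩
  have hWγ : Fintype.card (W i₀) ≤ γ := hγ ▸ Finset.le_sup (f := fun i => Fintype.card (W i)) (Finset.mem_univ i₀)
  set Λ : Set V := {u ∈ S | z ∈ WR G σ γ u} with hΛ
  set T : Set V := Λ ∪ WR G σ (2 * γ) z with hT
  -- key claim: every "bad" index contributes a private vertex of T
  have key : ∀ j : Fin (γ ^ X.ncard * δ), (S ∩ φ j '' (Subtype.val '' C'.supp)).Nonempty →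
      ∃ t, (t ∈ Set.range (φ j) \ X) ∧ t ∈ T := by
    intro j hj
    obtain ⟨s, hsS, hsim⟩ := hj
    obtain ⟨a, haC', rfl⟩ := hsim
    obtain ⟨c'', hc''C', rfl⟩ := haC'
    obtain ⟨d, hdCz, hdval⟩ := hC'sub ⟨c'', hc''C', rfl⟩
    obtain ⟨hfz, hmk⟩ := hCz
    have hreach : ((F i₀).induce Dᶜ).Reachable d ⟨f ⟨z, hz⟩, hfz⟩ := by
      have h1 : ((F i₀).induce Dᶜ).connectedComponentMk d = Cz :=
        (SimpleGraph.ConnectedComponent.mem_supp_iff _ _).mp hdCz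
      exact SimpleGraph.ConnectedComponent.exact (h1.trans hmk.symm)
    have : Fintype ↥(Dᶜ) := Fintype.ofFinite _
    obtain ⟨q0⟩ := hreach
    have hp0path : q0.bypass.IsPath := q0.bypass_isPath
    have hp0len : q0.bypass.length < Fintype.card ↥(Dᶜ) := hp0path.length_lt
    have hcard : Fintype.card ↥(Dᶜ) ≤ Fintype.card (W i₀) :=
      Fintype.card_le_of_injective Subtype.val Subtype.val_injective
    let h2 : F i₀ →g G := ⟨φ j, fun h => (hcopy j).2 _ _ h⟩
    let h12 : (F i₀).induce Dᶜ →g G :=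
      h2.comp (SimpleGraph.Embedding.induce Dᶜ).toHom
    have h12val : ∀ e : ↥(Dᶜ), h12 e = φ j (e : W i₀) := fun e => rfl
    have hinj12 : Function.Injective h12 := by
      intro a b hab
      exact Subtype.val_injective ((hcopy j).1 hab)
    have he1 : h12 d = φ j (c'' : W i₀) := by rw [h12val, hdval]
    have he2 : h12 ⟨f ⟨z, hz⟩, hfz⟩ = z := by rw [h12val]; exact hrestr j ⟨z, hz⟩
    set q : G.Walk (φ j (c'' : W i₀)) z := ((q0.bypass).map h12).copy he1 he2 with hq
    have hqpath : q.IsPath := by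
      rw [hq, SimpleGraph.Walk.isPath_copy]
      exact SimpleGraph.Walk.map_isPath_of_injective hinj12 hp0path
    have hqlen : q.length ≤ γ := by
      have h1 : q.length = q0.bypass.length := by
        rw [hq, SimpleGraph.Walk.length_copy, SimpleGraph.Walk.length_map]
      omega
    have hqsupp : ∀ u ∈ q.support, ∃ e : ↥(Dᶜ), e ∈ q0.bypass.support ∧ φ j (e : W i₀) = u := by
      intro u hu
      rw [hq, SimpleGraph.Walk.support_copy, SimpleGraph.Walk.support_map] at hu
      obtain ⟨e, he, rfl⟩ := List.mem_map.mp hu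
      exact ⟨e, he, (h12val e).symm⟩
    have hzsupp : z ∈ q.support := SimpleGraph.Walk.end_mem_support q
    have hne : q.support.toFinset.Nonempty := ⟨z, List.mem_toFinset.mpr hzsupp⟩
    obtain ⟨w, hwmem, hwmax⟩ := Finset.exists_max_image q.support.toFinset σ hne
    rw [List.mem_toFinset] at hwmem
    have hwmax' : ∀ u ∈ q.support, σ u ≤ σ w := fun u hu => hwmax u (List.mem_toFinset.mpr hu)
    have hz_le : σ z ≤ σ w := hwmax' z hzsupp
    have hXsupp : ∀ u ∈ q.support, ∀ huX : u ∈ X, σ u ≤ σ z := by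
      intro u hu huX
      obtain ⟨e, hep, hee⟩ := hqsupp u hu
      have hfe : f ⟨u, huX⟩ = (e : W i₀) := (hcopy j).1 (by rw [hrestr, hee])
      by_contra hlt
      push_neg at hlt
      have himg : (e : W i₀) ∈ f '' {x : ↥X | σ z < σ (x : V)} := ⟨⟨u, huX⟩, hlt, hfe⟩
      exact e.2 ((Set.ext_iff.mp hD _).mpr himg)
    by_cases hwz : w = z
    · -- the hitting vertex s weakly reaches z
      refine ⟨φ j (c'' : W i₀), ⟨⟨(c'' : W i₀), rfl⟩, ?_⟩, Or.inl ⟨hsS, ?_⟩⟩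
      · intro hX
        have : f ⟨φ j (c'' : W i₀), hX⟩ = (c'' : W i₀) := (hcopy j).1 (by rw [hrestr])
        exact c''.2 ⟨_, this⟩
      · exact ⟨q, hqpath, hqlen, fun u hu => hwz ▸ hwmax' u hu⟩
    · -- the maximum vertex w is weakly reachable from z
      obtain ⟨e, hep, hee⟩ := hqsupp w hwmem
      refine ⟨w, ⟨⟨(e : W i₀), hee⟩, ?_⟩, Or.inr ?_⟩
      · intro hwX
        have h1 : σ w ≤ σ z := hXsupp w hwmem hwX
        exact hwz (σ.injective (le_antisymm h1 hz_le))
      · have hw' : w ∈ q.reverse.support := by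
          rw [SimpleGraph.Walk.support_reverse]; exact List.mem_reverse.mpr hwmem
        refine ⟨q.reverse.takeUntil w hw', hqpath.reverse.takeUntil hw', ?_, ?_⟩
        · have := q.reverse.length_takeUntil_le hw'
          rw [SimpleGraph.Walk.length_reverse] at this
          omega
        · intro u hu
          have := SimpleGraph.Walk.support_takeUntil_subset q.reverse hw' hu
          rw [SimpleGraph.Walk.support_reverse] at this
          exact hwmax' u (List.mem_reverse.mp this)
  -- counting
  set Bad : Finset (Fin (γ ^ X.ncard * δ)) :=
    Finset.univ.filter (fun j => (S ∩ φ j '' (Subtype.val '' C'.supp)).Nonempty) with hBad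
  have hmemBad : ∀ j ∈ Bad, (S ∩ φ j '' (Subtype.val '' C'.supp)).Nonempty := by
    intro j hj; exact (Finset.mem_filter.mp hj).2
  let g : Fin (γ ^ X.ncard * δ) → V := fun j =>
    if h : (S ∩ φ j '' (Subtype.val '' C'.supp)).Nonempty then (key j h).choose else z
  have hgspec : ∀ j ∈ Bad, g j ∈ Set.range (φ j) \ X ∧ g j ∈ T := by
    intro j hj
    have h := hmemBad j hj
    simp only [g, dif_pos h]
    exact ⟨(key j h).choose_spec.1, (key j h).choose_spec.2⟩
  have hginj : Set.InjOn g Bad := by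
    intro j₁ h₁ j₂ h₂ heq
    by_contra hne
    have hdisj := hsun.2 hne
    have m1 := (hgspec j₁ h₁).1
    have m2 := (hgspec j₂ h₂).1
    rw [heq] at m1
    exact Set.disjoint_left.mp hdisj m1 m2
  have hBadT : Bad.card ≤ T.ncard := by
    have h1 : Bad.card ≤ T.toFinset.card := by
      apply Finset.card_le_card_of_injOn g
      · intro j hj
        exact Set.mem_toFinset.mpr (hgspec j hj).2
      · exact fun a ha b hb => hginj (Finset.mem_coe.mp ha) (Finset.mem_coe.mp hb)
    rwa [Set.ncard_eq_toFinset_card' T]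
  have hWRw : (WR G σ (2 * γ) z).ncard ≤ wcol G (2 * γ) := by
    calc (WR G σ (2 * γ) z).ncard ≤ wcolOn G σ (2 * γ) :=
          Finset.le_sup (f := fun v => (WR G σ (2 * γ) v).ncard) (Finset.mem_univ z)
      _ = wcol G (2 * γ) := hσ
  have hTcard : T.ncard ≤ Λ.ncard + wcol G (2 * γ) := by
    calc T.ncard ≤ Λ.ncard + (WR G σ (2 * γ) z).ncard := Set.ncard_union_le _ _
      _ ≤ Λ.ncard + wcol G (2 * γ) := by omega
  have hBadlt : (Bad.card : ℤ) < (δ : ℤ) - γ := by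
    have h1 : (Bad.card : ℤ) ≤ (Λ.ncard : ℤ) + wcol G (2 * γ) := by
      exact_mod_cast le_trans hBadT hTcard
    omega
  have hδΔ : δ ≤ γ ^ X.ncard * δ := Nat.le_mul_of_pos_left δ (Nat.pow_pos hγpos)
  have hBadnat : Bad.card + γ < δ := by exact_mod_cast by push_cast at hBadlt ⊢; omega
  have hcompl : γ ≤ Badᶜ.card := by
    rw [Finset.card_compl]
    have : Fintype.card (Fin (γ ^ X.ncard * δ)) = γ ^ X.ncard * δ := Fintype.card_fin (γ ^ X.ncard * δ)
    omega
  obtain ⟨J, hJsub, hJcard⟩ := Finset.exists_subset_card_eq hcompl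
  refine ⟨J, hJcard, fun j hjJ => ?_⟩
  have hjBad : j ∉ Bad := by
    have := hJsub hjJ
    simpa using this
  rw [hBad, Finset.mem_filter] at hjBad
  push_neg at hjBad
  exact hjBad (Finset.mem_univ j)
end

section
/- Let G be a graph, γ ≥ 0 an integer, σ a linear ordering of V(G) with wcol_{2γ}(G,σ) = wcol_{2γ}(G), S ⊆ V(G), and δ an integer with δ > γ + wcol_{2γ}(G). For v ∈ V(G) put λ_S(v) = |{u ∈ S : v ∈ WR_γ(G,σ,u)}| and let R = {v ∈ V(G) : λ_S(v) ≥ δ − γ − wcol_{2γ}(G)}. Then |R| ≤ (wcol_{2γ}(G)/(δ − γ − wcol_{2γ}(G))) · |S|. -/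
/-- `|R| ≤ (wcol_{2γ}(G)/(δ − γ − wcol_{2γ}(G))) · |S|`, where
`R = {v : λ_S(v) ≥ δ − γ − wcol_{2γ}(G)}` and `λ_S(v) = |{u ∈ S : v ∈ WR_γ(G,σ,u)}|`. -/
theorem stmt_13 {V : Type} [Fintype V] (G : SimpleGraph V) (γ : ℕ)
    (σ : V ↪ ℕ) (hσ : wcolOn G σ (2 * γ) = wcol G (2 * γ))
    (S : Set V) (δ : ℕ) (hδ : γ + wcol G (2 * γ) < δ) :
    (({v : V | (δ : ℤ) - γ - wcol G (2 * γ) ≤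
        ({u ∈ S | v ∈ WR G σ γ u}.ncard : ℤ)}).ncard : ℝ) ≤
      (wcol G (2 * γ) : ℝ) / ((δ : ℝ) - γ - wcol G (2 * γ)) * (S.ncard : ℝ) := by
  classical
  set w := wcol G (2 * γ) with hw
  set k := δ - (γ + w) with hk
  have hle : γ + w ≤ δ := hδ.le
  have hkpos : 0 < k := Nat.sub_pos_of_lt hδ
  set S' : Finset V := S.toFinset with hS'
  set P : V → Prop := fun v => (δ : ℤ) - γ - w ≤ ({u ∈ S | v ∈ WR G σ γ u}.ncard : ℤ) with hP
  set R' : Finset V := Finset.univ.filter P with hR'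
  -- λ sets as finsets
  set L : V → Finset V := fun v => S'.filter (fun u => v ∈ WR G σ γ u) with hL
  have hLcard : ∀ v, ({u ∈ S | v ∈ WR G σ γ u}).ncard = (L v).card := by
    intro v
    rw [← Set.ncard_coe_finset (L v)]
    congr 1
    ext u
    simp [hL, hS', Set.mem_toFinset]
  -- R ncard = R'.card
  have hRcard : ({v : V | P v}).ncard = R'.card := by
    rw [← Set.ncard_coe_finset R']
    congr 1
    ext v
    simp [hR']
  -- each v in R' has k ≤ (L v).card
  have hlow : ∀ v ∈ R', k ≤ (L v).card := by
    intro v hv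
    have hv' : P v := (Finset.mem_filter.mp hv).2
    have : ((k : ℤ)) ≤ ((L v).card : ℤ) := by
      have hkz : (k : ℤ) = (δ : ℤ) - γ - w := by
        rw [hk]; push_cast [hle]; ring
      rw [hkz]
      calc (δ : ℤ) - γ - w ≤ ({u ∈ S | v ∈ WR G σ γ u}.ncard : ℤ) := hv'
        _ = ((L v).card : ℤ) := by rw [hLcard v]
    exact_mod_cast this
  -- double count
  have hcount : ∑ v ∈ R', (L v).card = ∑ u ∈ S', (R'.filter (fun v => v ∈ WR G σ γ u)).card := by
    simp only [Finset.card_filter, hL]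
    exact Finset.sum_comm
  -- each inner ≤ w
  have hupper : ∀ u ∈ S', (R'.filter (fun v => v ∈ WR G σ γ u)).card ≤ w := by
    intro u _
    have hsub : R'.filter (fun v => v ∈ WR G σ γ u) ⊆ (WR G σ (2 * γ) u).toFinset := by
      intro v hv
      have hv' : v ∈ WR G σ γ u := (Finset.mem_filter.mp hv).2
      obtain ⟨p, h1, h2, h3⟩ := hv'
      exact Set.mem_toFinset.mpr ⟨p, h1, h2.trans (by omega), h3⟩
    calc (R'.filter (fun v => v ∈ WR G σ γ u)).card ≤ (WR G σ (2 * γ) u).toFinset.card :=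
          Finset.card_le_card hsub
      _ = (WR G σ (2 * γ) u).ncard := (Set.ncard_eq_toFinset_card' _).symm
      _ ≤ wcolOn G σ (2 * γ) := Finset.le_sup (f := fun v => (WR G σ (2 * γ) v).ncard) (Finset.mem_univ u)
      _ = w := hσ
  -- main nat inequality
  have hmain : R'.card * k ≤ S'.card * w := by
    calc R'.card * k = ∑ _v ∈ R', k := by rw [Finset.sum_const, smul_eq_mul]
      _ ≤ ∑ v ∈ R', (L v).card := Finset.sum_le_sum hlow
      _ = ∑ u ∈ S', (R'.filter (fun v => v ∈ WR G σ γ u)).card := hcount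
      _ ≤ ∑ _u ∈ S', w := Finset.sum_le_sum hupper
      _ = S'.card * w := by rw [Finset.sum_const, smul_eq_mul]
  -- convert to ℝ
  have hScard : S.ncard = S'.card := Set.ncard_eq_toFinset_card' S
  have hkR : ((δ : ℝ) - γ - w) = (k : ℝ) := by
    rw [hk]; push_cast [hle]; ring
  have hkRpos : (0 : ℝ) < (k : ℝ) := by exact_mod_cast hkpos
  rw [hRcard, hScard, hkR, div_mul_eq_mul_div, le_div_iff₀ hkRpos]
  calc (R'.card : ℝ) * k = ((R'.card * k : ℕ) : ℝ) := by push_cast; ring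
    _ ≤ ((S'.card * w : ℕ) : ℝ) := by exact_mod_cast hmain
    _ = (w : ℝ) * S'.card := by push_cast; ring
end

section
/- Let 𝓕 be a finite set of graphs. For any graph G, a subset S ⊆ V(G) is an 𝓕-hitting set of G if and only if S is an 𝓕⁺-hitting set of G⁺, where G⁺ is obtained from G by adding a single new vertex adjacent to all vertices of G and 𝓕⁺ = {F⁺ : F ∈ 𝓕} with each F⁺ obtained from F by adding a single new vertex adjacent to all vertices of F. -/
lemma addUniversal_adj_some {V : Type} (G : SimpleGraph V) (a b : V) :
    (addUniversal G).Adj (some a) (some b) ↔ G.Adj a b := by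
  constructor
  · rintro ⟨hne, (⟨x, y, hx, hy, h⟩ | h) | (⟨x, y, hx, hy, h⟩ | h)⟩
    · cases hx; cases hy; exact h
    · simp at h
    · cases hx; cases hy; exact h.symm
    · simp at h
  · intro h
    exact ⟨by simpa using h.ne, Or.inl (Or.inl ⟨a, b, rfl, rfl, h⟩)⟩

lemma addUniversal_adj_none {V : Type} (G : SimpleGraph V) (a : V) :
    (addUniversal G).Adj none (some a) :=
  ⟨by simp, Or.inl (Or.inr rfl)⟩

lemma addUniversal_copy_key {W V : Type} (F : SimpleGraph W) (G : SimpleGraph V)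
    (φ : Option W → Option V)
    (hφ : IsCopy (addUniversal F) (addUniversal G) φ)
    (e : W → Option W) (he : Function.Injective e)
    (headj : ∀ a b, F.Adj a b → (addUniversal F).Adj (e a) (e b))
    (hne : ∀ w, φ (e w) ≠ none) :
    ∃ ψ : W → V, IsCopy F G ψ ∧ ∀ w, φ (e w) = some (ψ w) := by
  choose ψ hψ using fun w => Option.ne_none_iff_exists.mp (hne w)
  refine ⟨ψ, ⟨?_, ?_⟩, fun w => (hψ w).symm⟩
  · intro a b hab
    apply he
    apply hφ.1
    rw [← hψ a, ← hψ b, hab]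
  · intro a b hab
    have := hφ.2 _ _ (headj a b hab)
    rw [← hψ a, ← hψ b] at this
    exact (addUniversal_adj_some G _ _).mp this

/-- `S` is an `𝓕`-hitting set of `G` iff `S` is an `𝓕⁺`-hitting set of `G⁺`,
where `⁺` adds one new universal vertex. -/
theorem stmt_14 {V ι : Type} [Fintype V] [Fintype ι] {W : ι → Type} [∀ i, Fintype (W i)]
    (F : ∀ i, SimpleGraph (W i)) (G : SimpleGraph V) (S : Set V) :
    IsHittingSet G F S ↔
      IsHittingSet (addUniversal G) (fun i => addUniversal (F i)) (some '' S) := by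
  classical
  constructor
  · intro h i φ hφ
    by_cases h0 : ∀ w, φ (some w) ≠ none
    · obtain ⟨ψ, hcopy, hval⟩ := addUniversal_copy_key (F i) G φ hφ some
        (fun a b hab => Option.some_injective _ hab)
        (fun a b hab => (addUniversal_adj_some (F i) a b).mpr hab) h0
      obtain ⟨w, hw⟩ := h i ψ hcopy
      exact ⟨some w, by rw [hval w]; exact ⟨ψ w, hw, rfl⟩⟩
    · push_neg at h0
      obtain ⟨w0, hw0⟩ := h0
      set e : W i → Option (W i) := fun w => if w = w0 then none else some w with he_def
      have he : Function.Injective e := by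
        intro a b hab
        by_cases ha : a = w0 <;> by_cases hb : b = w0 <;>
          simp [he_def, ha, hb] at hab <;> simp_all
      have hnone : φ none ≠ none := by
        intro hc
        have := hφ.1 (hc.trans hw0.symm)
        simp at this
      have hne : ∀ w, φ (e w) ≠ none := by
        intro w
        by_cases hw : w = w0
        · simpa [he_def, hw] using hnone
        · simp only [he_def, if_neg hw]
          intro hc
          exact hw (Option.some_injective _ (hφ.1 (hc.trans hw0.symm)))
      have headj : ∀ a b, (F i).Adj a b → (addUniversal (F i)).Adj (e a) (e b) := by
        intro a b hab
        by_cases ha : a = w0 <;> by_cases hb : b = w0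
        · exact absurd (ha.trans hb.symm) hab.ne
        · simpa [he_def, ha, hb] using addUniversal_adj_none (F i) b
        · simpa [he_def, ha, hb] using (addUniversal_adj_none (F i) a).symm
        · simpa [he_def, ha, hb] using (addUniversal_adj_some (F i) a b).mpr hab
      obtain ⟨ψ, hcopy, hval⟩ := addUniversal_copy_key (F i) G φ hφ e he headj hne
      obtain ⟨w, hw⟩ := h i ψ hcopy
      exact ⟨e w, by rw [hval w]; exact ⟨ψ w, hw, rfl⟩⟩
  · intro h i ψ hψ
    have hcopy : IsCopy (addUniversal (F i)) (addUniversal G) (Option.map ψ) := by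
      refine ⟨Option.map_injective hψ.1, ?_⟩
      intro a b hab
      match a, b with
      | none, none => exact absurd rfl hab.ne
      | none, some b => exact addUniversal_adj_none G (ψ b)
      | some a, none => exact (addUniversal_adj_none G (ψ a)).symm
      | some a, some b =>
        exact (addUniversal_adj_some G _ _).mpr
          (hψ.2 a b ((addUniversal_adj_some (F i) a b).mp hab))
    obtain ⟨a, ha⟩ := h i (Option.map ψ) hcopy
    match a with
    | none => simp at ha
    | some w =>
      obtain ⟨x, hx, hxeq⟩ := ha
      exact ⟨w, by rwa [← Option.some_injective _ hxeq]⟩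
end

section
/- Let 𝓕 be a finite set of graphs, G a graph, k ∈ ℕ, K ⊆ V(G), and 𝓧 a collection of subsets of K such that every X ∈ 𝓧 is the core of a sunflower formed by more than k pairwise distinct sets from 𝓥_𝓕(G[K]). Suppose that for every V ∈ 𝓥_𝓕(G) with V ⊄ K there exists X ∈ 𝓧 with X ⊆ V. Then every 𝓕-hitting set S ⊆ K of the induced subgraph G[K] with |S| ≤ k is also an 𝓕-hitting set of G. -/
/-- if every `X ∈ 𝓧` (with `𝓧` a collection of subsets of `K`) is the core of
a sunflower of more than `k` pairwise distinct sets from `𝓥_𝓕(G[K])`, and every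
`V ∈ 𝓥_𝓕(G)` with `V ⊄ K` contains some `X ∈ 𝓧`, then every `𝓕`-hitting set `S ⊆ K` of
`G[K]` with `|S| ≤ k` is also an `𝓕`-hitting set of `G`. -/
theorem stmt_15 {V ι : Type} [Fintype V] [Fintype ι] {W : ι → Type} [∀ i, Fintype (W i)]
    (F : ∀ i, SimpleGraph (W i)) (G : SimpleGraph V) (k : ℕ)
    (K : Set V) (𝓧 : Set (Set V))
    (h𝓧K : ∀ X ∈ 𝓧, X ⊆ K)
    (hcore : ∀ X ∈ 𝓧, ∃ p : ℕ, k < p ∧ ∃ Us : Fin p → Set ↥K,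
      (∀ j, Us j ∈ VF (G.induce K) F) ∧ Function.Injective Us ∧
      IsSunflower (fun j => Subtype.val '' Us j) X)
    (hcover : ∀ A ∈ VF G F, ¬ A ⊆ K → ∃ X ∈ 𝓧, X ⊆ A)
    (S : Set V) (hSK : S ⊆ K) (hSk : S.ncard ≤ k)
    (hhit : IsHittingSet (G.induce K) F (Subtype.val ⁻¹' S)) :
    IsHittingSet G F S := by
  intro i φ hφ
  by_cases hK : Set.range φ ⊆ K
  · let φ' : W i → ↥K := fun w => ⟨φ w, hK ⟨w, rfl⟩⟩
    have hcopy : IsCopy (F i) (G.induce K) φ' := by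
      refine ⟨fun a b hab => hφ.1 (congrArg Subtype.val hab), fun a b hadj => ?_⟩
      exact hφ.2 a b hadj
    obtain ⟨a, ha⟩ := hhit i φ' hcopy
    exact ⟨a, ha⟩
  · obtain ⟨X, hX𝓧, hXφ⟩ := hcover _ ⟨i, φ, hφ, rfl⟩ hK
    obtain ⟨p, hkp, Us, hUsVF, hUsinj, hXsub, hdisj⟩ := hcore X hX𝓧
    have hhitj : ∀ j, ∃ v : V, v ∈ S ∧ v ∈ Subtype.val '' Us j := by
      intro j
      obtain ⟨i', ψ, hc', hEq⟩ := hUsVF j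
      obtain ⟨a, ha⟩ := hhit i' ψ hc'
      exact ⟨(ψ a : V), ha, ⟨ψ a, by rw [hEq]; exact ⟨a, rfl⟩, rfl⟩⟩
    by_cases hall : ∀ j : Fin p, ∃ v : V, v ∈ S ∧ v ∈ (Subtype.val '' Us j) \ X
    · exfalso
      choose g hgS hg using hall
      have hginj : Function.Injective g := by
        intro j1 j2 h
        by_contra hne
        exact ((hdisj hne).le_bot ⟨hg j1, h ▸ hg j2⟩)
      have hcard : p ≤ S.ncard := by
        have : Nat.card (Fin p) ≤ Nat.card S :=
          Nat.card_le_card_of_injective (fun j => (⟨g j, hgS j⟩ : S))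
            (fun j1 j2 h => hginj (congrArg Subtype.val h))
        simpa [Nat.card_coe_set_eq] using this
      omega
    · push_neg at hall
      obtain ⟨j, hj⟩ := hall
      obtain ⟨v, hvS, hvU⟩ := hhitj j
      have hvX : v ∈ X := by
        by_contra h
        exact hj v hvS ⟨hvU, h⟩
      obtain ⟨a, rfl⟩ := hXφ hvX
      exact ⟨a, hvS⟩
end

section
/- Let η, μ ≥ 0, 0 ≤ ρ < 1, and let 𝓕 be a finite set of graphs. There exist constants C ≥ 1 and d ≥ 1 (depending only on η, μ, ρ, and 𝓕) such that for every graph G admitting balanced (η,μ,ρ)-separators and every k ∈ ℕ, there exists an induced subgraph G' of G with |V(G')| ≤ C·(k+1)^d such that every 𝓕-hitting set S ⊆ V(G') of G' with |S| ≤ k is also an 𝓕-hitting set of G. -/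
/-- Recursive bound on kernel size. -/
def Bfun (k : ℕ) : ℕ → ℕ
  | 0 => 1
  | m + 1 => k + 1 + k * (m + 1) * Bfun k m

lemma hyper_kernel {V : Type} [DecidableEq V] (k : ℕ) :
    ∀ (m : ℕ) (H : Finset (Finset V)), (∀ e ∈ H, e.card ≤ m) →
    ∃ K ⊆ H, K.card ≤ Bfun k m ∧
      ∀ S : Finset V, S.card ≤ k → (∀ e ∈ K, (S ∩ e).Nonempty) →
        ∀ e ∈ H, (S ∩ e).Nonempty := by
  intro m
  induction m with
  | zero =>
    intro H hH
    refine ⟨H, subset_rfl, ?_, fun S _ h e he => h e he⟩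
    rw [Bfun]
    apply Finset.card_le_one.2
    intro a ha b hb
    have := Finset.card_eq_zero.1 (Nat.le_zero.1 (hH a ha))
    have := Finset.card_eq_zero.1 (Nat.le_zero.1 (hH b hb))
    simp_all
  | succ m ih =>
    intro H hH
    -- maximal matching
    set 𝒮 : Finset (Finset (Finset V)) :=
      H.powerset.filter (fun M => (M : Set (Finset V)).Pairwise Disjoint) with h𝒮
    have h𝒮ne : 𝒮.Nonempty := ⟨∅, by simp [h𝒮]⟩
    obtain ⟨M, hM𝒮, hMmax⟩ := 𝒮.exists_max_image Finset.card h𝒮ne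
    have hMH : M ⊆ H := Finset.mem_powerset.1 (Finset.mem_filter.1 hM𝒮).1
    have hMP : (M : Set (Finset V)).Pairwise Disjoint := (Finset.mem_filter.1 hM𝒮).2
    have hmaximal : ∀ e ∈ H, e ∉ M → ∃ f ∈ M, ¬ Disjoint e f := by
      intro e heH heM
      by_contra hcon
      push_neg at hcon
      have hins : insert e M ∈ 𝒮 := by
        rw [h𝒮, Finset.mem_filter, Finset.mem_powerset]
        constructor
        · exact Finset.insert_subset heH hMH
        · rw [Finset.coe_insert]
          exact hMP.insert (fun f hf _ => ⟨hcon f hf, (hcon f hf).symm⟩)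
      have := hMmax _ hins
      rw [Finset.card_insert_of_notMem heM] at this
      omega
    by_cases hMk : k + 1 ≤ M.card
    · -- big matching: vacuous
      obtain ⟨K, hKM, hKcard⟩ := Finset.exists_subset_card_eq hMk
      refine ⟨K, hKM.trans hMH, by rw [Bfun]; omega, ?_⟩
      intro S hS hhit e _
      exfalso
      have hKne : K.Nonempty := Finset.card_pos.1 (by omega)
      obtain ⟨x0, _⟩ := hhit hKne.choose hKne.choose_spec
      have hKP : (K : Set (Finset V)).Pairwise Disjoint := hMP.mono hKM
      have : K.card ≤ S.card := by
        apply Finset.card_le_card_of_injOn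
          (fun e => if h : (S ∩ e).Nonempty then h.choose else x0)
        · intro e he
          have h := hhit e he
          simp only [h, dif_pos]
          exact Finset.mem_of_mem_inter_left h.choose_spec
        · intro a ha b hb hab
          by_contra hne
          simp only [Finset.mem_coe] at ha hb
          have h1 := hhit a ha
          have h2 := hhit b hb
          simp only [h1, h2, dif_pos] at hab
          have hx1 : h1.choose ∈ a := Finset.mem_of_mem_inter_right h1.choose_spec
          have hx2 : h2.choose ∈ b := Finset.mem_of_mem_inter_right h2.choose_spec
          rw [hab] at hx1
          exact Finset.disjoint_left.1 (hKP ha hb hne) hx1 hx2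
      omega
    · push_neg at hMk
      set P : Finset V := M.biUnion id with hP
      -- recursion for each v in P
      have hIH : ∀ v : V, ∃ K' ⊆ (H.filter (fun e => v ∈ e)).image (fun e => e.erase v),
          K'.card ≤ Bfun k m ∧
          ∀ S : Finset V, S.card ≤ k → (∀ e ∈ K', (S ∩ e).Nonempty) →
            ∀ e ∈ (H.filter (fun e => v ∈ e)).image (fun e => e.erase v),
              (S ∩ e).Nonempty := by
        intro v
        apply ih
        intro f hf
        obtain ⟨e, he, rfl⟩ := Finset.mem_image.1 hf
        have := hH e (Finset.mem_filter.1 he).1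
        have hv := (Finset.mem_filter.1 he).2
        have := Finset.card_erase_of_mem hv
        omega
      choose K' hK'sub hK'card hK'prop using hIH
      set Kv : V → Finset (Finset V) :=
        fun v => H.filter (fun e => v ∈ e ∧ e.erase v ∈ K' v) with hKv
      refine ⟨M ∪ P.biUnion Kv, ?_, ?_, ?_⟩
      · apply Finset.union_subset hMH
        intro e he
        obtain ⟨v, _, hev⟩ := Finset.mem_biUnion.1 he
        exact (Finset.mem_filter.1 hev).1
      · -- cardinality
        have hKvcard : ∀ v, (Kv v).card ≤ Bfun k m := by
          intro v
          refine le_trans ?_ (hK'card v)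
          apply Finset.card_le_card_of_injOn (fun e => e.erase v)
          · intro e he
            exact (Finset.mem_filter.1 he).2.2
          · intro a ha b hb hab
            simp only [Finset.mem_coe, hKv, Finset.mem_filter] at ha hb
            simp only [] at hab
            rw [← Finset.insert_erase ha.2.1, hab, Finset.insert_erase hb.2.1]
        have hPcard : P.card ≤ k * (m + 1) := by
          calc P.card ≤ M.card * (m + 1) := by
                rw [hP]
                refine le_trans (Finset.card_biUnion_le) ?_
                refine le_trans (Finset.sum_le_card_nsmul M _ (m+1) ?_) (by simp)
                intro e he
                exact hH e (hMH he)
            _ ≤ k * (m + 1) := by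
                have : M.card ≤ k := by omega
                exact Nat.mul_le_mul_right _ this
        calc (M ∪ P.biUnion Kv).card ≤ M.card + (P.biUnion Kv).card :=
              Finset.card_union_le _ _
          _ ≤ k + (k * (m+1)) * Bfun k m := by
              have h1 : (P.biUnion Kv).card ≤ P.card * Bfun k m := by
                refine le_trans Finset.card_biUnion_le ?_
                refine le_trans (Finset.sum_le_card_nsmul P _ (Bfun k m)
                  (fun v _ => hKvcard v)) (by simp)
              have h2 : P.card * Bfun k m ≤ k * (m+1) * Bfun k m :=
                Nat.mul_le_mul_right _ hPcard
              omega
          _ ≤ Bfun k (m + 1) := by rw [Bfun]; omega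
      · -- correctness
        intro S hS hhit e heH
        by_cases heM : e ∈ M
        · exact hhit e (Finset.mem_union_left _ heM)
        obtain ⟨f, hfM, hdisj⟩ := hmaximal e heH heM
        obtain ⟨v, hve, hvf⟩ := Finset.not_disjoint_iff.1 hdisj
        have hvP : v ∈ P := Finset.mem_biUnion.2 ⟨f, hfM, hvf⟩
        by_cases hvS : v ∈ S
        · exact ⟨v, Finset.mem_inter.2 ⟨hvS, hve⟩⟩
        · have hall : ∀ g ∈ K' v, (S ∩ g).Nonempty := by
            intro g hg
            obtain ⟨e', he'H, he'g⟩ := Finset.mem_image.1 (hK'sub v hg)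
            have he'Kv : e' ∈ Kv v := by
              rw [hKv, Finset.mem_filter]
              exact ⟨(Finset.mem_filter.1 he'H).1, (Finset.mem_filter.1 he'H).2,
                he'g ▸ hg⟩
            obtain ⟨x, hx⟩ := hhit e' (Finset.mem_union_right _
              (Finset.mem_biUnion.2 ⟨v, hvP, he'Kv⟩))
            have hxS := Finset.mem_of_mem_inter_left hx
            have hxe' := Finset.mem_of_mem_inter_right hx
            refine ⟨x, Finset.mem_inter.2 ⟨hxS, ?_⟩⟩
            rw [← he'g]
            exact Finset.mem_erase.2 ⟨fun h => hvS (h ▸ hxS), hxe'⟩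
          have := hK'prop v S hS hall (e.erase v)
            (Finset.mem_image.2 ⟨e, Finset.mem_filter.2 ⟨heH, hve⟩, rfl⟩)
          obtain ⟨x, hx⟩ := this
          exact ⟨x, Finset.mem_inter.2 ⟨Finset.mem_of_mem_inter_left hx,
            Finset.mem_of_mem_erase (Finset.mem_of_mem_inter_right hx)⟩⟩

lemma Bfun_le (k : ℕ) : ∀ m, Bfun k m ≤ ((m+1)*(k+1)+1)^(m+1) := by
  intro m
  induction m with
  | zero => simp [Bfun]
  | succ m ih =>
    rw [Bfun]
    set Q := (m+2)*(k+1)+1 with hQ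
    have hmono : ((m+1)*(k+1)+1)^(m+1) ≤ Q^(m+1) := by
      apply Nat.pow_le_pow_left
      have : (m+1)*(k+1) ≤ (m+2)*(k+1) := Nat.mul_le_mul_right _ (by omega)
      omega
    have h1 : k + 1 ≤ Q^(m+1) := by
      calc k + 1 ≤ Q := by nlinarith
        _ ≤ Q^(m+1) := Nat.le_self_pow (by omega) Q
    have h2 : k * (m+1) * Bfun k m ≤ ((m+2)*(k+1)) * Q^(m+1) := by
      apply Nat.mul_le_mul
      · nlinarith
      · exact le_trans ih hmono
    calc k + 1 + k * (m+1) * Bfun k m ≤ Q^(m+1) + ((m+2)*(k+1)) * Q^(m+1) := by omega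
      _ = Q ^ (m+2) := by rw [hQ]; ring


/-- linear-time polynomial kernel, combinatorial content: there are constants
`C, d ≥ 1` depending only on `η, μ, ρ, 𝓕` such that every graph `G` with balanced
`(η,μ,ρ)`-separators and every `k` admit an induced subgraph `G' = G[A]` with
`|V(G')| ≤ C·(k+1)^d` such that every `𝓕`-hitting set `S ⊆ A` of `G[A]` with `|S| ≤ k` is
also an `𝓕`-hitting set of `G`. -/
theorem stmt_17 {ι : Type} [Fintype ι] {W : ι → Type} [∀ i, Fintype (W i)]
    (F : ∀ i, SimpleGraph (W i)) (η μ ρ : ℝ)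
    (hη : 0 ≤ η) (hμ : 0 ≤ μ) (hρ0 : 0 ≤ ρ) (hρ1 : ρ < 1) :
    ∃ C d : ℝ, 1 ≤ C ∧ 1 ≤ d ∧
      ∀ (V : Type) [Fintype V] (G : SimpleGraph V), HasBalancedSeparators G η μ ρ →
      ∀ k : ℕ, ∃ A : Set V, (A.ncard : ℝ) ≤ C * ((k : ℝ) + 1) ^ d ∧
        ∀ S : Set V, S ⊆ A → S.ncard ≤ k →
          IsHittingSet (G.induce A) F (Subtype.val ⁻¹' S) → IsHittingSet G F S := by
  classical
  set γ := Finset.univ.sup fun i : ι => Fintype.card (W i) with hγ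
  refine ⟨((γ : ℝ) + 2) ^ (γ + 2), (γ : ℝ) + 1, ?_, ?_, ?_⟩
  · apply one_le_pow₀
    have : (0:ℝ) ≤ (γ:ℝ) := Nat.cast_nonneg γ
    linarith
  · have : (0:ℝ) ≤ (γ:ℝ) := Nat.cast_nonneg γ
    linarith
  intro V _ G _ k
  set Hs : Finset (Finset V) :=
    ((Set.toFinite {e : Finset V | ∃ (i : ι) (φ : W i → V), IsCopy (F i) G φ ∧
      e = Finset.image φ Finset.univ}).toFinset) with hHs
  have hHsmem : ∀ e, e ∈ Hs ↔
      ∃ (i : ι) (φ : W i → V), IsCopy (F i) G φ ∧ e = Finset.image φ Finset.univ := by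
    intro e
    rw [hHs, Set.Finite.mem_toFinset]
    rfl
  have hHscard : ∀ e ∈ Hs, e.card ≤ γ := by
    intro e he
    obtain ⟨i, φ, hφ, rfl⟩ := (hHsmem e).1 he
    rw [Finset.card_image_of_injective _ hφ.1, Finset.card_univ]
    exact Finset.le_sup (f := fun i : ι => Fintype.card (W i)) (Finset.mem_univ i)
  obtain ⟨K, hKsub, hKcard, hKprop⟩ := hyper_kernel k γ Hs hHscard
  refine ⟨↑(K.biUnion id), ?_, ?_⟩
  · -- size bound
    rw [Set.ncard_coe_finset]
    have h1 : (K.biUnion id).card ≤ Bfun k γ * γ := by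
      refine le_trans Finset.card_biUnion_le ?_
      refine le_trans (Finset.sum_le_card_nsmul K _ γ
        (fun e he => hHscard e (hKsub he))) ?_
      rw [smul_eq_mul]
      exact Nat.mul_le_mul_right _ hKcard
    have h2 : Bfun k γ * γ ≤ (γ+2)^(γ+2) * (k+1)^(γ+1) := by
      have hb : Bfun k γ ≤ ((γ+2)*(k+1))^(γ+1) := by
        refine le_trans (Bfun_le k γ) (Nat.pow_le_pow_left (by nlinarith) _)
      calc Bfun k γ * γ ≤ ((γ+2)*(k+1))^(γ+1) * (γ+2) :=
            Nat.mul_le_mul hb (by omega)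
        _ = (γ+2)^(γ+2) * (k+1)^(γ+1) := by rw [mul_pow]; ring
    have h3 := le_trans h1 h2
    calc ((K.biUnion id).card : ℝ) ≤ (((γ+2)^(γ+2) * (k+1)^(γ+1) : ℕ) : ℝ) :=
          Nat.cast_le.2 h3
      _ = ((γ:ℝ)+2)^(γ+2) * ((k:ℝ)+1)^((γ:ℝ)+1) := by
          rw [show (γ:ℝ)+1 = ((γ+1 : ℕ):ℝ) by push_cast; ring, Real.rpow_natCast]
          push_cast
          ring
  · intro S hSA hScard hHit i φ hφ
    have heH : Finset.image φ Finset.univ ∈ Hs := (hHsmem _).2 ⟨i, φ, hφ, rfl⟩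
    have hSfin : S.Finite := Set.toFinite S
    have hits : ∀ e ∈ K, (hSfin.toFinset ∩ e).Nonempty := by
      intro e he
      obtain ⟨i', ψ, hψ, rfl⟩ := (hHsmem e).1 (hKsub he)
      have hsub : ∀ a, ψ a ∈ (↑(K.biUnion id) : Set V) := by
        intro a
        have : ψ a ∈ K.biUnion id :=
          Finset.mem_biUnion.2 ⟨_, he, Finset.mem_image_of_mem ψ (Finset.mem_univ a)⟩
        exact this
      set ψ' : W i' → ↥(↑(K.biUnion id) : Set V) := fun a => ⟨ψ a, hsub a⟩ with hψ'
      have hcopy : IsCopy (F i') (G.induce ↑(K.biUnion id)) ψ' := by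
        constructor
        · intro a b h
          exact hψ.1 (congrArg Subtype.val h)
        · intro a b h
          exact hψ.2 a b h
      obtain ⟨a, ha⟩ := hHit i' ψ' hcopy
      exact ⟨ψ a, Finset.mem_inter.2 ⟨hSfin.mem_toFinset.2 ha,
        Finset.mem_image_of_mem _ (Finset.mem_univ a)⟩⟩
    have hScard' : hSfin.toFinset.card ≤ k := by
      rwa [← Set.ncard_eq_toFinset_card _ hSfin]
    obtain ⟨x, hx⟩ := hKprop hSfin.toFinset hScard' hits _ heH
    obtain ⟨a, _, rfl⟩ := Finset.mem_image.1 (Finset.mem_of_mem_inter_right hx)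
    exact ⟨a, hSfin.mem_toFinset.1 (Finset.mem_of_mem_inter_left hx)⟩
end
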